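/- arXiv:2404.16725 — 13 statements merged into one kernel-verified Lean document; each statement's English description precedes it below -/
import Mathlib

section
/- Let (x,f) be a feasible solution to LP-BB on a graph with m ≥ 2 edges. Then there exists a feasible solution (x',f') to LP-BB such that (i) for every edge e, either x'_e = 0 or x'_e ≥ 1/m², (ii) f'_p = 0 for every path p that uses an edge e with x'_e = 0, and (iii) the cost of (x',f') is at most (1 + 1/(m−1)) times the cost of (x,f). -/
/-!
Zero out every edge with `x e < ε := 1/m²`. By the capacity constraints, the paths of one
commodity that use such an edge carry flow at most `m · ε = 1/m` in total, so discarding them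
leaves at least `1 - 1/m` of the commodity's flow. Renormalising the surviving flow multiplies
each path by at most `(1 - 1/m)⁻¹ = 1 + 1/(m-1)`, so scaling the surviving `x e` by the same
factor keeps the capacity constraints, keeps them at least `ε`, and scales the cost by at most
that factor.
-/

open Finset

section SingleCommodity

variable {α ι : Type*} [Fintype ι] [DecidableEq α]

def edgeLoad (edges : ι → List α) (f : ι → ℝ) (e : α) : ℝ :=
  ∑ p, if e ∈ edges p then f p else 0

theorem edgeLoad_le_mul {edges : ι → List α} {f g : ι → ℝ} {a : ℝ} (h : ∀ p, g p ≤ a * f p)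
    (e : α) : edgeLoad edges g e ≤ a * edgeLoad edges f e := by
  rw [edgeLoad, edgeLoad, mul_sum]
  gcongr with p
  split_ifs
  exacts [h p, (mul_zero a).ge]

theorem edgeLoad_eq_zero {edges : ι → List α} {f : ι → ℝ} {e : α}
    (h : ∀ p, e ∈ edges p → f p = 0) : edgeLoad edges f e = 0 :=
  sum_eq_zero fun p _ => ite_eq_right_iff.mpr (h p)

theorem sum_ite_exists_le_sum_edgeLoad {edges : ι → List α} {f : ι → ℝ} (hf : 0 ≤ f)
    {E : Finset α} (hE : ∀ p, ∀ e ∈ edges p, e ∈ E) (P : α → Prop) [DecidablePred P] :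
    (∑ p, if ∃ e ∈ edges p, P e then f p else 0) ≤ ∑ e ∈ E with P e, edgeLoad edges f e := by
  simp only [edgeLoad]
  rw [sum_comm]
  gcongr with p
  have hnonneg : ∀ e ∈ E.filter P, 0 ≤ if e ∈ edges p then f p else 0 :=
    fun _ _ => ite_nonneg (hf p) le_rfl
  split_ifs with hbad
  · obtain ⟨e, hep, hPe⟩ := hbad
    calc f p = if e ∈ edges p then f p else 0 := (if_pos hep).symm
      _ ≤ _ := single_le_sum hnonneg (mem_filter.2 ⟨hE p e hep, hPe⟩)
  · exact sum_nonneg hnonneg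

theorem sum_ite_exists_lt_le_card_mul {edges : ι → List α} {f : ι → ℝ} (hf : 0 ≤ f)
    {E : Finset α} (hE : ∀ p, ∀ e ∈ edges p, e ∈ E) {x : α → ℝ}
    (hcap : ∀ e ∈ E, edgeLoad edges f e ≤ x e) {ε : ℝ} (hε : 0 ≤ ε) :
    (∑ p, if ∃ e ∈ edges p, x e < ε then f p else 0) ≤ #E * ε :=
  calc (∑ p, if ∃ e ∈ edges p, x e < ε then f p else 0)
      ≤ ∑ e ∈ E with x e < ε, edgeLoad edges f e := sum_ite_exists_le_sum_edgeLoad hf hE (x · < ε)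
    _ ≤ ∑ e ∈ E with x e < ε, ε :=
      sum_le_sum fun e he => (hcap e (mem_filter.1 he).1).trans (mem_filter.1 he).2.le
    _ = (#{e ∈ E | x e < ε} : ℝ) * ε := by rw [sum_const, nsmul_eq_mul]
    _ ≤ #E * ε := by gcongr; exact filter_subset _ E

theorem exists_prune_of_card_mul_lt_one {edges : ι → List α} {f : ι → ℝ} (hf : 0 ≤ f)
    (hsum : ∑ p, f p = 1) {E : Finset α} (hE : ∀ p, ∀ e ∈ edges p, e ∈ E) {x : α → ℝ}
    (hcap : ∀ e ∈ E, edgeLoad edges f e ≤ x e) {ε : ℝ} (hε : 0 ≤ ε) (hη : #E * ε < 1) :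
    ∃ g : ι → ℝ, 0 ≤ g ∧ ∑ p, g p = 1 ∧ (∀ p, (∃ e ∈ edges p, x e < ε) → g p = 0) ∧
      ∀ p, g p ≤ (1 - #E * ε)⁻¹ * f p := by
  classical
  set kept := ∑ p, if ∃ e ∈ edges p, x e < ε then 0 else f p
  have hkept : 1 - #E * ε ≤ kept := by
    have hsplit : (∑ p, if ∃ e ∈ edges p, x e < ε then f p else 0) + kept = 1 := by
      simp only [kept, ← sum_add_distrib, ite_add_ite, add_zero, zero_add, ite_self, hsum]
    linarith [sum_ite_exists_lt_le_card_mul hf hE hcap hε]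
  have hkept_pos : 0 < kept := by linarith
  refine ⟨fun p => (if ∃ e ∈ edges p, x e < ε then 0 else f p) / kept, fun p => ?_, ?_,
    fun p hp => by simp [hp], fun p => ?_⟩
  · exact div_nonneg (ite_nonneg le_rfl (hf p)) hkept_pos.le
  · rw [← sum_div, div_self hkept_pos.ne']
  · rw [inv_mul_eq_div]
    exact div_le_div₀ (hf p) (by split_ifs; exacts [hf p, le_rfl]) (by linarith) hkept

end SingleCommodity

theorem sum_mul_le_mul_sum_mul {ι : Type*} {s : Finset ι} {w u v : ι → ℝ} {a : ℝ}
    (hw : ∀ i ∈ s, 0 ≤ w i) (h : ∀ i ∈ s, u i ≤ a * v i) :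
    ∑ i ∈ s, w i * u i ≤ a * ∑ i ∈ s, w i * v i := by
  rw [mul_sum]
  refine sum_le_sum fun i hi => ?_
  calc w i * u i ≤ w i * (a * v i) := mul_le_mul_of_nonneg_left (h i hi) (hw i hi)
    _ = a * (w i * v i) := mul_left_comm _ _ _

theorem exists_rounding_of_card_mul_lt_one {α κ : Type*} [DecidableEq α] [Fintype κ]
    {ι : κ → Type*} [∀ i, Fintype (ι i)] (edges : ∀ i, ι i → List α) (E : Finset α)
    (hE : ∀ i p, ∀ e ∈ edges i p, e ∈ E) (c ℓ : α → ℝ) (δ : κ → ℝ)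
    (hc : ∀ e, 0 ≤ c e) (hℓ : ∀ e, 0 ≤ ℓ e) (hδ : ∀ i, 0 ≤ δ i)
    (x : α → ℝ) (f : ∀ i, ι i → ℝ) (hx : ∀ e, 0 ≤ x e) (hf : ∀ i p, 0 ≤ f i p)
    (hflow : ∀ i, ∑ p, f i p = 1) (hcap : ∀ i, ∀ e ∈ E, edgeLoad (edges i) (f i) e ≤ x e)
    {ε : ℝ} (hε : 0 < ε) (hη : #E * ε < 1) :
    ∃ (x' : α → ℝ) (f' : ∀ i, ι i → ℝ),
      (∀ e, 0 ≤ x' e) ∧ (∀ i p, 0 ≤ f' i p) ∧ (∀ i, ∑ p, f' i p = 1) ∧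
      (∀ i, ∀ e ∈ E, edgeLoad (edges i) (f' i) e ≤ x' e) ∧
      (∀ e ∈ E, x' e = 0 ∨ ε ≤ x' e) ∧
      (∀ i p, (∃ e ∈ edges i p, x' e = 0) → f' i p = 0) ∧
      (∑ e ∈ E, c e * x' e + ∑ i, δ i * ∑ p, ((edges i p).map ℓ).sum * f' i p
        ≤ (1 - #E * ε)⁻¹ *
          (∑ e ∈ E, c e * x e + ∑ i, δ i * ∑ p, ((edges i p).map ℓ).sum * f i p)) := by
  set a := (1 - #E * ε)⁻¹
  have ha : 1 ≤ a := (one_le_inv₀ (by linarith)).2 (by linarith [mul_nonneg (#E).cast_nonneg hε.le])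
  have ha0 : 0 ≤ a := zero_le_one.trans ha
  choose g hg0 hg1 hgbad hgle using
    fun i => exists_prune_of_card_mul_lt_one (fun p => hf i p) (hflow i) (hE i) (hcap i) hε.le hη
  have hx'le : ∀ e, (if x e < ε then 0 else a * x e) ≤ a * x e := fun e => by
    split_ifs; exacts [mul_nonneg ha0 (hx e), le_rfl]
  refine ⟨fun e => if x e < ε then 0 else a * x e, g, fun e => ?_, hg0, hg1, fun i e he => ?_,
    fun e _ => ?_, ?_, ?_⟩
  · dsimp only
    split_ifs; exacts [le_rfl, mul_nonneg ha0 (hx e)]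
  · dsimp only
    split_ifs with hsmall
    · exact (edgeLoad_eq_zero fun p hp => hgbad i p ⟨e, hp, hsmall⟩).le
    · exact (edgeLoad_le_mul (hgle i) e).trans (by gcongr; exact hcap i e he)
  · dsimp only
    split_ifs with hsmall
    exacts [.inl rfl, .inr ((not_lt.1 hsmall).trans (le_mul_of_one_le_left (hx e) ha))]
  · rintro i p ⟨e, hep, hx'e⟩
    refine hgbad i p ⟨e, hep, by_contra fun hlarge => ?_⟩
    simp only [if_neg hlarge] at hx'e
    exact (mul_pos (by linarith) (hε.trans_le (not_lt.1 hlarge))).ne' hx'e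
  · have hlen : ∀ i p, 0 ≤ ((edges i p).map ℓ).sum := fun i p =>
      List.sum_nonneg (List.forall_mem_map.2 fun e _ => hℓ e)
    rw [mul_add]
    exact add_le_add (sum_mul_le_mul_sum_mul (fun e _ => hc e) fun e _ => hx'le e)
      (sum_mul_le_mul_sum_mul (fun i _ => hδ i) fun i _ =>
        sum_mul_le_mul_sum_mul (fun p _ => hlen i p) fun p _ => hgle i p)

/-- Let `(x, f)` be a feasible solution to LP-BB on a graph with `m ≥ 2`
edges.  Then there exists a feasible solution `(x', f')` to LP-BB such that
(i) every edge `e` has `x' e = 0` or `x' e ≥ 1/m²`,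
(ii) `f' p = 0` for every path `p` using an edge `e` with `x' e = 0`, and
(iii) the cost of `(x', f')` is at most `(1 + 1/(m-1))` times the cost of `(x, f)`. -/
theorem lp_bb_rounding_small_values
    {V : Type*} [Fintype V] [DecidableEq V] (G : SimpleGraph V) [DecidableRel G.Adj]
    (r : ℕ) (s t : Fin r → V)
    (c ℓ : Sym2 V → ℝ) (δ : Fin r → ℝ)
    (hc : ∀ e, 0 ≤ c e) (hℓ : ∀ e, 0 ≤ ℓ e) (hδ : ∀ i, 0 ≤ δ i)
    (m : ℕ) (hm : m = G.edgeFinset.card) (hm2 : 2 ≤ m)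
    (x : Sym2 V → ℝ) (f : ∀ i : Fin r, G.Path (s i) (t i) → ℝ)
    (hx : ∀ e, 0 ≤ x e) (hf : ∀ i p, 0 ≤ f i p)
    (hflow : ∀ i, ∑ p : G.Path (s i) (t i), f i p = 1)
    (hcap : ∀ i : Fin r, ∀ e ∈ G.edgeFinset,
      ∑ p : G.Path (s i) (t i), (if e ∈ p.1.edges then f i p else 0) ≤ x e) :
    ∃ (x' : Sym2 V → ℝ) (f' : ∀ i : Fin r, G.Path (s i) (t i) → ℝ),
      (∀ e, 0 ≤ x' e) ∧ (∀ i p, 0 ≤ f' i p) ∧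
      (∀ i, ∑ p : G.Path (s i) (t i), f' i p = 1) ∧
      (∀ i : Fin r, ∀ e ∈ G.edgeFinset,
        ∑ p : G.Path (s i) (t i), (if e ∈ p.1.edges then f' i p else 0) ≤ x' e) ∧
      -- (i): each edge value is 0 or at least 1/m²
      (∀ e ∈ G.edgeFinset, x' e = 0 ∨ 1 / (m : ℝ) ^ 2 ≤ x' e) ∧
      -- (ii): paths through zeroed-out edges carry no flow
      (∀ i : Fin r, ∀ p : G.Path (s i) (t i),
        (∃ e ∈ p.1.edges, x' e = 0) → f' i p = 0) ∧
      -- (iii): cost increases by a factor of at most 1 + 1/(m-1)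
      (∑ e ∈ G.edgeFinset, c e * x' e +
          ∑ i, δ i * ∑ p : G.Path (s i) (t i), (p.1.edges.map ℓ).sum * f' i p
        ≤ (1 + 1 / ((m : ℝ) - 1)) *
          (∑ e ∈ G.edgeFinset, c e * x e +
            ∑ i, δ i * ∑ p : G.Path (s i) (t i), (p.1.edges.map ℓ).sum * f i p)) := by
  have hm1 : (1 : ℝ) < m := by exact_mod_cast hm2
  have hη : (#G.edgeFinset : ℝ) * (1 / (m : ℝ) ^ 2) < 1 := by
    rw [← hm, mul_one_div, div_lt_one (by positivity)]
    nlinarith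
  have hscale : (1 - (#G.edgeFinset : ℝ) * (1 / (m : ℝ) ^ 2))⁻¹ = 1 + 1 / ((m : ℝ) - 1) := by
    have : (m : ℝ) - 1 ≠ 0 := by linarith
    rw [← hm]
    field_simp
    ring
  obtain ⟨x', f', hx', hf', hflow', hcap', hsmall', hzero', hcost'⟩ :=
    exists_rounding_of_card_mul_lt_one (fun i (p : G.Path (s i) (t i)) => p.1.edges)
      G.edgeFinset (fun i p e he => G.mem_edgeFinset.2 (p.1.edges_subset_edgeSet he))
      c ℓ δ hc hℓ hδ x f hx hf hflow hcap (by positivity) hη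
  exact ⟨x', f', hx', hf', hflow', hcap', hsmall', hzero', hscale ▸ hcost'⟩
end

section
/- Let (x,f) be a feasible solution to LP-BB on a graph with m ≥ 2 edges. Then there exists a feasible solution (x',f') to LP-BB whose cost is at most (1 + 1/(m−1))^m times the cost of (x,f) such that (i) for every edge e, either x'_e = 0 or x'_e ≥ 1/m², (ii) f'_p = 0 for every path p that uses an edge e with x'_e = 0, and (iii) for every edge e with x'_e > 0 there exists an index i ∈ [r] with ∑_{p∈P_i: e∈p} f'_p = x'_e. -/
/-!
Let `x_e = max_i ∑_{p ∋ e} f_p` be the least capacity supporting `f`. The edges with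
`x_e < 1/m²` carry together at most `m · 1/m² = 1/m` of each commodity, so discarding every
path through one of them and rescaling each commodity by its remaining mass `≥ 1 - 1/m`
multiplies every path value, hence the cost, by at most `m/(m-1) = 1 + 1/(m-1)`, and zeroes
those edges. Each such round removes at least one edge from the support of `x` as long as some
`x_e` lies strictly between `0` and `1/m²`, so at most `m` rounds are needed. Finally
`x' = max_i ∑_{p ∋ e} f'_p` makes (ii) and (iii) automatic.
-/

open Finset

theorem exists_normalize_restrict {α : Type*} [Fintype α] {g : α → ℝ} (hg : ∀ a, 0 ≤ g a)
    (keep : α → Prop) [DecidablePred keep] {b : ℝ} (hb : 1 ≤ b * ∑ a with keep a, g a) :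
    ∃ g' : α → ℝ, (∀ a, 0 ≤ g' a) ∧ ∑ a, g' a = 1 ∧ (∀ a, g' a ≤ b * g a) ∧
      ∀ a, ¬keep a → g' a = 0 := by
  set μ := ∑ a with keep a, g a
  have hμ : 0 < μ := by
    refine (sum_nonneg fun a _ => hg a).lt_of_ne fun h => ?_
    rw [show μ = 0 from h.symm, mul_zero] at hb
    linarith
  have hb0 : 0 ≤ b := by nlinarith
  refine ⟨fun a => if keep a then g a / μ else 0, fun a => ?_, ?_, fun a => ?_,
    fun a ha => if_neg ha⟩
  · have := hg a
    dsimp only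
    split_ifs <;> positivity
  · rw [← sum_filter, ← sum_div, div_self hμ.ne']
  · have := hg a
    dsimp only
    split_ifs
    · rw [div_le_iff₀ hμ]
      nlinarith
    · positivity

theorem one_le_one_add_one_div_sub_one {a : ℝ} (ha : 1 ≤ a) : 1 ≤ 1 + 1 / (a - 1) :=
  le_add_of_nonneg_right (one_div_nonneg.2 (sub_nonneg.2 ha))

namespace SimpleGraph

theorem Walk.sum_map_edges_nonneg {V : Type*} {G : SimpleGraph V} {ℓ : Sym2 V → ℝ}
    (hℓ : ∀ e, 0 ≤ ℓ e) {u v : V} (p : G.Walk u v) : 0 ≤ (p.edges.map ℓ).sum :=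
  List.sum_nonneg (by simpa using fun e _ => hℓ e)

variable {V ι : Type*} [Fintype V] [DecidableEq V] {G : SimpleGraph V} [DecidableRel G.Adj]
  {s t : ι → V}

structure IsUnitFlow (f : ∀ i, G.Path (s i) (t i) → ℝ) : Prop where
  nonneg : ∀ i p, 0 ≤ f i p
  sum_eq_one : ∀ i, ∑ p, f i p = 1

noncomputable def flowLoad (f : ∀ i, G.Path (s i) (t i) → ℝ) (i : ι) (e : Sym2 V) : ℝ :=
  ∑ p, if e ∈ p.1.edges then f i p else 0

-- The least capacity vector supporting `f`; with no commodities the empty `⨆` is `0` in `ℝ`.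
noncomputable def peakLoad (f : ∀ i, G.Path (s i) (t i) → ℝ) (e : Sym2 V) : ℝ :=
  ⨆ i, flowLoad f i e

noncomputable def flowCost [Fintype ι] (c ℓ : Sym2 V → ℝ) (δ : ι → ℝ) (x : Sym2 V → ℝ)
    (f : ∀ i, G.Path (s i) (t i) → ℝ) : ℝ :=
  ∑ e ∈ G.edgeFinset, c e * x e + ∑ i, δ i * ∑ p, (p.1.edges.map ℓ).sum * f i p

noncomputable def peakSupport (f : ∀ i, G.Path (s i) (t i) → ℝ) : Finset (Sym2 V) :=
  {e ∈ G.edgeFinset | 0 < peakLoad f e}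

section Load

variable {f f' : ∀ i, G.Path (s i) (t i) → ℝ}

theorem flowLoad_nonneg (hf : ∀ i p, 0 ≤ f i p) (i : ι) (e : Sym2 V) : 0 ≤ flowLoad f i e :=
  sum_nonneg fun p _ => by split_ifs <;> simp [hf]

theorem le_flowLoad (hf : ∀ i p, 0 ≤ f i p) {i : ι} {p : G.Path (s i) (t i)} {e : Sym2 V}
    (he : e ∈ p.1.edges) : f i p ≤ flowLoad f i e := by
  simpa [flowLoad, he] using single_le_sum (f := fun q : G.Path (s i) (t i) =>
    if e ∈ q.1.edges then f i q else 0) (fun q _ => by split_ifs <;> simp [hf]) (mem_univ p)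

theorem flowLoad_eq_zero {i : ι} {e : Sym2 V}
    (h : ∀ p : G.Path (s i) (t i), e ∈ p.1.edges → f i p = 0) : flowLoad f i e = 0 :=
  sum_eq_zero fun p _ => by split_ifs with he <;> simp [h p, he]

theorem flowLoad_le_mul {b : ℝ} (h : ∀ i p, f' i p ≤ b * f i p) (i : ι) (e : Sym2 V) :
    flowLoad f' i e ≤ b * flowLoad f i e := by
  rw [flowLoad, flowLoad, mul_sum]
  exact sum_le_sum fun p _ => by split_ifs <;> simp [h]

theorem sum_filter_le_sum_flowLoad (hf : ∀ i p, 0 ≤ f i p) (i : ι) (S : Finset (Sym2 V))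
    (keep : G.Path (s i) (t i) → Prop) [DecidablePred keep]
    (h : ∀ p, ¬keep p → ∃ e ∈ S, e ∈ p.1.edges) :
    ∑ p with ¬keep p, f i p ≤ ∑ e ∈ S, flowLoad f i e := by
  have hterm : ∀ e p, 0 ≤ if e ∈ p.1.edges then f i p else 0 := fun e p => by
    split_ifs <;> simp [hf]
  calc ∑ p with ¬keep p, f i p
      ≤ ∑ p with ¬keep p, ∑ e ∈ S, if e ∈ p.1.edges then f i p else 0 :=
        sum_le_sum fun p hp => by
          obtain ⟨e, heS, hep⟩ := h p (mem_filter.1 hp).2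
          simpa [hep] using single_le_sum (fun e _ => hterm e p) heS
    _ ≤ ∑ p, ∑ e ∈ S, if e ∈ p.1.edges then f i p else 0 :=
        sum_le_sum_of_subset_of_nonneg (filter_subset _ _) fun p _ _ =>
          sum_nonneg fun e _ => hterm e p
    _ = ∑ e ∈ S, flowLoad f i e := sum_comm

theorem peakLoad_nonneg (hf : ∀ i p, 0 ≤ f i p) (e : Sym2 V) : 0 ≤ peakLoad f e :=
  Real.iSup_nonneg fun i => flowLoad_nonneg hf i e

theorem peakLoad_le {e : Sym2 V} {a : ℝ} (h : ∀ i, flowLoad f i e ≤ a) (ha : 0 ≤ a) :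
    peakLoad f e ≤ a :=
  Real.iSup_le h ha

end Load

section Peak

variable [Finite ι] {f f' : ∀ i, G.Path (s i) (t i) → ℝ}

theorem flowLoad_le_peakLoad (i : ι) (e : Sym2 V) : flowLoad f i e ≤ peakLoad f e :=
  le_ciSup (f := fun i => flowLoad f i e) (Finite.bddAbove_range _) i

theorem exists_flowLoad_eq_peakLoad {e : Sym2 V} (h : 0 < peakLoad f e) :
    ∃ i, flowLoad f i e = peakLoad f e := by
  cases isEmpty_or_nonempty ι
  · exact absurd (Real.iSup_of_isEmpty _) h.ne'
  · exact exists_eq_ciSup_of_finite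

theorem sum_flowLoad_le_card_mul {S : Finset (Sym2 V)} {a : ℝ} (h : ∀ e ∈ S, peakLoad f e < a)
    (i : ι) : ∑ e ∈ S, flowLoad f i e ≤ #S * a := by
  simpa using sum_le_card_nsmul S _ a fun e he => ((flowLoad_le_peakLoad i e).trans_lt (h e he)).le

theorem peakLoad_le_mul {b : ℝ} (hb : 0 ≤ b) (h : ∀ i p, f' i p ≤ b * f i p) (e : Sym2 V) :
    peakLoad f' e ≤ b * peakLoad f e := by
  rw [peakLoad, peakLoad, Real.mul_iSup_of_nonneg hb]
  exact ciSup_mono (Finite.bddAbove_range _) fun i => flowLoad_le_mul h i e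

theorem peakSupport_subset_of_le_mul {b : ℝ} (hb : 0 ≤ b) (h : ∀ i p, f' i p ≤ b * f i p) :
    peakSupport f' ⊆ peakSupport f := fun e he => by
  obtain ⟨he, hpos⟩ := mem_filter.1 he
  exact mem_filter.2 ⟨he, pos_of_mul_pos_right (hpos.trans_le (peakLoad_le_mul hb h e)) hb⟩

end Peak

section Cost

variable [Fintype ι] {c ℓ : Sym2 V → ℝ} {δ : ι → ℝ} {x x' : Sym2 V → ℝ}
  {f f' : ∀ i, G.Path (s i) (t i) → ℝ}

theorem flowCost_nonneg (hc : ∀ e, 0 ≤ c e) (hℓ : ∀ e, 0 ≤ ℓ e) (hδ : ∀ i, 0 ≤ δ i)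
    (hx : ∀ e, 0 ≤ x e) (hf : ∀ i p, 0 ≤ f i p) : 0 ≤ flowCost c ℓ δ x f :=
  add_nonneg (sum_nonneg fun e _ => mul_nonneg (hc e) (hx e)) <|
    sum_nonneg fun i _ => mul_nonneg (hδ i) <| sum_nonneg fun p _ =>
      mul_nonneg (p.1.sum_map_edges_nonneg hℓ) (hf i p)

theorem flowCost_mono_left (hc : ∀ e, 0 ≤ c e) (hx : ∀ e ∈ G.edgeFinset, x' e ≤ x e) :
    flowCost c ℓ δ x' f ≤ flowCost c ℓ δ x f :=
  add_le_add_left (sum_le_sum fun e he => mul_le_mul_of_nonneg_left (hx e he) (hc e)) _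

theorem flowCost_le_mul (hc : ∀ e, 0 ≤ c e) (hℓ : ∀ e, 0 ≤ ℓ e) (hδ : ∀ i, 0 ≤ δ i) {b : ℝ}
    (hx : ∀ e ∈ G.edgeFinset, x' e ≤ b * x e) (hf : ∀ i p, f' i p ≤ b * f i p) :
    flowCost c ℓ δ x' f' ≤ b * flowCost c ℓ δ x f := by
  rw [flowCost, flowCost, mul_add, mul_sum, mul_sum]
  refine add_le_add (sum_le_sum fun e he => ?_) (sum_le_sum fun i _ => ?_)
  · rw [mul_left_comm]
    exact mul_le_mul_of_nonneg_left (hx e he) (hc e)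
  · rw [mul_left_comm b, mul_sum _ _ b]
    refine mul_le_mul_of_nonneg_left (sum_le_sum fun p _ => ?_) (hδ i)
    rw [mul_left_comm b]
    exact mul_le_mul_of_nonneg_left (hf i p) (p.1.sum_map_edges_nonneg hℓ)

end Cost

theorem IsUnitFlow.exists_prune [Fintype ι] {f : ∀ i, G.Path (s i) (t i) → ℝ} (hf : IsUnitFlow f)
    {m : ℕ} (hm : 2 ≤ m) (hcard : #G.edgeFinset ≤ m) :
    ∃ f₁ : ∀ i, G.Path (s i) (t i) → ℝ, IsUnitFlow f₁ ∧
      (∀ i p, f₁ i p ≤ (1 + 1 / ((m : ℝ) - 1)) * f i p) ∧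
      ∀ e ∈ G.edgeFinset, peakLoad f e < 1 / (m : ℝ) ^ 2 → peakLoad f₁ e = 0 := by
  set S := {e ∈ G.edgeFinset | peakLoad f e < 1 / (m : ℝ) ^ 2}
  have hM : (2 : ℝ) ≤ m := by exact_mod_cast hm
  have hM1 : (m : ℝ) - 1 ≠ 0 := by linarith
  have hmiss : ∀ i, ∑ p with ¬∀ e ∈ p.1.edges, e ∉ S, f i p ≤ 1 / m := fun i => calc
    _ ≤ ∑ e ∈ S, flowLoad f i e :=
        sum_filter_le_sum_flowLoad hf.nonneg i S _ fun p hp => by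
          push Not at hp
          exact hp.imp fun e he => ⟨he.2, he.1⟩
    _ ≤ #S * (1 / (m : ℝ) ^ 2) := sum_flowLoad_le_card_mul (fun e he => (mem_filter.1 he).2) i
    _ ≤ m * (1 / (m : ℝ) ^ 2) := by
        gcongr
        exact_mod_cast (card_filter_le _ _).trans hcard
    _ = 1 / m := by field_simp
  have hkeep : ∀ i, 1 ≤ (1 + 1 / ((m : ℝ) - 1)) * ∑ p with ∀ e ∈ p.1.edges, e ∉ S, f i p := by
    intro i
    have hsplit := sum_filter_add_sum_filter_not univ (fun p => ∀ e ∈ p.1.edges, e ∉ S) (f i)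
    rw [hf.sum_eq_one] at hsplit
    calc (1 : ℝ) = (1 + 1 / ((m : ℝ) - 1)) * (1 - 1 / m) := by
          field_simp
          ring
      _ ≤ _ := by
        gcongr
        · exact (zero_le_one.trans (one_le_one_add_one_div_sub_one (by linarith)))
        · linarith [hmiss i]
  choose f₁ hnonneg hsum hle hzero using
    fun i => exists_normalize_restrict (hf.nonneg i) _ (hkeep i)
  refine ⟨f₁, ⟨hnonneg, hsum⟩, hle, fun e he hsmall => le_antisymm ?_ (peakLoad_nonneg hnonneg e)⟩
  refine peakLoad_le (fun i => (flowLoad_eq_zero fun p hep => hzero i p ?_).le) le_rfl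
  exact fun h => h e hep (mem_filter.2 ⟨he, hsmall⟩)

theorem IsUnitFlow.exists_peakLoad_eq_zero_or_ge [Fintype ι] {c ℓ : Sym2 V → ℝ} {δ : ι → ℝ}
    (hc : ∀ e, 0 ≤ c e) (hℓ : ∀ e, 0 ≤ ℓ e) (hδ : ∀ i, 0 ≤ δ i) {m : ℕ} (hm : 2 ≤ m)
    (hcard : #G.edgeFinset ≤ m) {f : ∀ i, G.Path (s i) (t i) → ℝ} (hf : IsUnitFlow f) :
    ∃ f' : ∀ i, G.Path (s i) (t i) → ℝ, IsUnitFlow f' ∧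
      (∀ e ∈ G.edgeFinset, peakLoad f' e = 0 ∨ 1 / (m : ℝ) ^ 2 ≤ peakLoad f' e) ∧
      flowCost c ℓ δ (peakLoad f') f' ≤ (1 + 1 / ((m : ℝ) - 1)) ^
        #(peakSupport f) * flowCost c ℓ δ (peakLoad f) f := by
  set b := 1 + 1 / ((m : ℝ) - 1)
  have hb : 1 ≤ b := one_le_one_add_one_div_sub_one (by exact_mod_cast one_le_two.trans hm)
  induction hk : #(peakSupport f) using Nat.strong_induction_on generalizing f with
  | _ k ih =>
  by_cases hthin : ∃ e ∈ G.edgeFinset, 0 < peakLoad f e ∧ peakLoad f e < 1 / (m : ℝ) ^ 2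
  · obtain ⟨e₀, he₀, hpos, hsmall⟩ := hthin
    obtain ⟨f₁, hf₁, hle, hzero⟩ := hf.exists_prune hm hcard
    have hsupp : peakSupport f₁ ⊂ peakSupport f :=
      (ssubset_iff_of_subset (peakSupport_subset_of_le_mul (zero_le_one.trans hb) hle)).2
        ⟨e₀, mem_filter.2 ⟨he₀, hpos⟩, by simp [peakSupport, hzero e₀ he₀ hsmall]⟩
    obtain ⟨f', hf', hgap, hcost⟩ := ih _ (hk ▸ card_lt_card hsupp) hf₁ rfl
    refine ⟨f', hf', hgap, hcost.trans ?_⟩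
    calc b ^ #(peakSupport f₁) * flowCost c ℓ δ (peakLoad f₁) f₁
        ≤ b ^ #(peakSupport f₁) * (b * flowCost c ℓ δ (peakLoad f) f) := by
          gcongr
          exact flowCost_le_mul hc hℓ hδ
            (fun e _ => peakLoad_le_mul (zero_le_one.trans hb) hle e) hle
      _ = b ^ (#(peakSupport f₁) + 1) * flowCost c ℓ δ (peakLoad f) f := by
          ring
      _ ≤ b ^ k * flowCost c ℓ δ (peakLoad f) f := by
          gcongr
          · exact flowCost_nonneg hc hℓ hδ (peakLoad_nonneg hf.nonneg) hf.nonneg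
          · exact hk ▸ card_lt_card hsupp
  · push Not at hthin
    refine ⟨f, hf, fun e he => (peakLoad_nonneg hf.nonneg e).eq_or_lt.imp Eq.symm (hthin e he),
      le_mul_of_one_le_left ?_ (one_le_pow₀ hb)⟩
    exact flowCost_nonneg hc hℓ hδ (peakLoad_nonneg hf.nonneg) hf.nonneg

end SimpleGraph

open SimpleGraph in
/-- Let `(x, f)` be a feasible solution to LP-BB on a graph with `m ≥ 2`
edges.  Then there exists a feasible solution `(x', f')` to LP-BB whose cost is at most
`(1 + 1/(m-1))^m` times the cost of `(x, f)` such that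
(i) every edge `e` has `x' e = 0` or `x' e ≥ 1/m²`,
(ii) `f' p = 0` for every path `p` using an edge `e` with `x' e = 0`, and
(iii) every edge `e` with `x' e > 0` has some index `i` with `∑_{p ∋ e} f'_p = x' e`. -/
theorem lp_bb_rounding_tight_edges
    {V : Type*} [Fintype V] [DecidableEq V] (G : SimpleGraph V) [DecidableRel G.Adj]
    (r : ℕ) (s t : Fin r → V)
    (c ℓ : Sym2 V → ℝ) (δ : Fin r → ℝ)
    (hc : ∀ e, 0 ≤ c e) (hℓ : ∀ e, 0 ≤ ℓ e) (hδ : ∀ i, 0 ≤ δ i)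
    (m : ℕ) (hm : m = G.edgeFinset.card) (hm2 : 2 ≤ m)
    (x : Sym2 V → ℝ) (f : ∀ i : Fin r, G.Path (s i) (t i) → ℝ)
    (hx : ∀ e, 0 ≤ x e) (hf : ∀ i p, 0 ≤ f i p)
    (hflow : ∀ i, ∑ p : G.Path (s i) (t i), f i p = 1)
    (hcap : ∀ i : Fin r, ∀ e ∈ G.edgeFinset,
      ∑ p : G.Path (s i) (t i), (if e ∈ p.1.edges then f i p else 0) ≤ x e) :
    ∃ (x' : Sym2 V → ℝ) (f' : ∀ i : Fin r, G.Path (s i) (t i) → ℝ),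
      (∀ e, 0 ≤ x' e) ∧ (∀ i p, 0 ≤ f' i p) ∧
      (∀ i, ∑ p : G.Path (s i) (t i), f' i p = 1) ∧
      (∀ i : Fin r, ∀ e ∈ G.edgeFinset,
        ∑ p : G.Path (s i) (t i), (if e ∈ p.1.edges then f' i p else 0) ≤ x' e) ∧
      -- (i): each edge value is 0 or at least 1/m²
      (∀ e ∈ G.edgeFinset, x' e = 0 ∨ 1 / (m : ℝ) ^ 2 ≤ x' e) ∧
      -- (ii): paths through zeroed-out edges carry no flow
      (∀ i : Fin r, ∀ p : G.Path (s i) (t i),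
        (∃ e ∈ p.1.edges, x' e = 0) → f' i p = 0) ∧
      -- (iii): every positive edge value is tight for some commodity
      (∀ e ∈ G.edgeFinset, 0 < x' e →
        ∃ i : Fin r, ∑ p : G.Path (s i) (t i), (if e ∈ p.1.edges then f' i p else 0) = x' e) ∧
      -- cost increases by a factor of at most (1 + 1/(m-1))^m
      (∑ e ∈ G.edgeFinset, c e * x' e +
          ∑ i, δ i * ∑ p : G.Path (s i) (t i), (p.1.edges.map ℓ).sum * f' i p
        ≤ (1 + 1 / ((m : ℝ) - 1)) ^ m *
          (∑ e ∈ G.edgeFinset, c e * x e +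
            ∑ i, δ i * ∑ p : G.Path (s i) (t i), (p.1.edges.map ℓ).sum * f i p)) := by
  have hb : 1 ≤ 1 + 1 / ((m : ℝ) - 1) :=
    one_le_one_add_one_div_sub_one (by exact_mod_cast one_le_two.trans hm2)
  obtain ⟨f', hf', hgap, hcost⟩ :=
    IsUnitFlow.exists_peakLoad_eq_zero_or_ge hc hℓ hδ hm2 hm.ge (f := f) ⟨hf, hflow⟩
  refine ⟨peakLoad f', f', peakLoad_nonneg hf'.nonneg, hf'.nonneg, hf'.sum_eq_one,
    fun i e _ => flowLoad_le_peakLoad i e, hgap, ?_, fun e _ => exists_flowLoad_eq_peakLoad, ?_⟩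
  · rintro i p ⟨e, hep, hzero⟩
    exact le_antisymm (hzero ▸ (le_flowLoad hf'.nonneg hep).trans (flowLoad_le_peakLoad i e))
      (hf'.nonneg i p)
  · calc flowCost c ℓ δ (peakLoad f') f'
        ≤ (1 + 1 / ((m : ℝ) - 1)) ^ m * flowCost c ℓ δ (peakLoad f) f := by
          refine hcost.trans (mul_le_mul_of_nonneg_right (pow_le_pow_right₀ hb ?_) ?_)
          · exact hm ▸ card_filter_le _ _
          · exact flowCost_nonneg hc hℓ hδ (peakLoad_nonneg hf) hf
      _ ≤ (1 + 1 / ((m : ℝ) - 1)) ^ m * flowCost c ℓ δ x f := by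
          gcongr
          exact flowCost_mono_left hc fun e he => peakLoad_le (hcap · e he) (hx e)
end

section
/- Let V be a finite set, let h be a nonnegative integer, and set ε = 1/(4(h+1)). Let μ be a (finitely supported) probability distribution over subsets S ⊆ V such that for every v ∈ V, Pr_{S∼μ}[v ∈ S] ≥ 1 − ε. Let P be a finite index set and for each p ∈ P let V_p ⊆ V be a set with |V_p| ≤ h+1, and let f_p ≥ 0 be reals with ∑_{p∈P} f_p = 1. Then Pr_{S∼μ}[ ∑_{p∈P : V_p ⊆ S} f_p ≥ 1/2 ] ≥ 1/2. -/
open Finset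

/-- Abstract flow-preservation lemma.  Let `μ` be a finitely supported
probability distribution over subsets `S ⊆ V` such that each vertex is included with
probability at least `1 - ε` where `ε = 1/(4(h+1))`.  Given finitely many sets
`V_p ⊆ V` with `|V_p| ≤ h + 1` and nonnegative weights `f_p` summing to `1`, the total
weight of indices `p` with `V_p ⊆ S` is at least `1/2` with probability at least `1/2`. -/
theorem flow_preservation
    {V : Type*} [Fintype V] [DecidableEq V]
    (h : ℕ) (ε : ℝ) (hε : ε = 1 / (4 * ((h : ℝ) + 1)))
    (μ : Finset V → ℝ) (hμ0 : ∀ S, 0 ≤ μ S) (hμ1 : ∑ S : Finset V, μ S = 1)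
    (hincl : ∀ v : V, 1 - ε ≤ ∑ S : Finset V, (if v ∈ S then μ S else 0))
    {P : Type*} [Fintype P] (Vp : P → Finset V) (hVp : ∀ p, (Vp p).card ≤ h + 1)
    (f : P → ℝ) (hf : ∀ p, 0 ≤ f p) (hfsum : ∑ p : P, f p = 1) :
    (1 : ℝ) / 2 ≤
      ∑ S : Finset V,
        (if (1 : ℝ) / 2 ≤ ∑ p ∈ Finset.univ.filter (fun p => Vp p ⊆ S), f p
          then μ S else 0) := by
  set Z : Finset V → ℝ := fun S => ∑ p ∈ Finset.univ.filter (fun p => Vp p ⊆ S), f p with hZ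
  have hc : (0:ℝ) < (h:ℝ) + 1 := by positivity
  have hε0 : 0 ≤ ε := by rw [hε]; positivity
  have hεval : ((h:ℝ)+1) * ε = 1/4 := by rw [hε]; field_simp
  have hnn : ∀ (S : Finset V) (c : Prop) [Decidable c], 0 ≤ (if c then μ S else 0) := by
    intro S c _; split
    · exact hμ0 S
    · exact le_rfl
  have hZ0 : ∀ S, 0 ≤ Z S := fun S => Finset.sum_nonneg fun p _ => hf p
  have hZle1 : ∀ S, Z S ≤ 1 := by
    intro S
    rw [← hfsum]
    exact Finset.sum_le_sum_of_subset_of_nonneg (Finset.filter_subset _ _)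
      (fun p _ _ => hf p)
  have hmiss : ∀ v : V, ∑ S : Finset V, (if v ∉ S then μ S else 0) ≤ ε := by
    intro v
    have hsplit : ∑ S : Finset V, (if v ∈ S then μ S else 0)
        + ∑ S : Finset V, (if v ∉ S then μ S else 0) = 1 := by
      rw [← Finset.sum_add_distrib, ← hμ1]
      refine Finset.sum_congr rfl fun S _ => ?_
      by_cases hv : v ∈ S <;> simp [hv]
    have := hincl v
    linarith
  have hq : ∀ p, 1 - 1/4 ≤ ∑ S : Finset V, (if Vp p ⊆ S then μ S else 0) := by
    intro p
    have hbad : ∑ S : Finset V, (if ¬ Vp p ⊆ S then μ S else 0) ≤ 1/4 := by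
      have h1 : ∀ S : Finset V, (if ¬ Vp p ⊆ S then μ S else 0)
          ≤ ∑ v ∈ Vp p, (if v ∉ S then μ S else 0) := by
        intro S
        by_cases hs : Vp p ⊆ S
        · simp only [hs, not_true, if_false]
          exact Finset.sum_nonneg fun v _ => hnn S _
        · simp only [hs, not_false_iff, if_true]
          obtain ⟨v, hv, hvs⟩ := Finset.not_subset.mp hs
          have hle := Finset.single_le_sum (f := fun w => if w ∉ S then μ S else 0)
            (fun w _ => hnn S _) hv
          simpa [hvs] using hle
      calc ∑ S : Finset V, (if ¬ Vp p ⊆ S then μ S else 0)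
          ≤ ∑ S : Finset V, ∑ v ∈ Vp p, (if v ∉ S then μ S else 0) :=
            Finset.sum_le_sum fun S _ => h1 S
        _ = ∑ v ∈ Vp p, ∑ S : Finset V, (if v ∉ S then μ S else 0) := Finset.sum_comm
        _ ≤ ∑ v ∈ Vp p, ε := Finset.sum_le_sum fun v _ => hmiss v
        _ = ((Vp p).card : ℝ) * ε := by rw [Finset.sum_const, nsmul_eq_mul]
        _ ≤ ((h:ℝ)+1) * ε := by
            apply mul_le_mul_of_nonneg_right _ hε0
            exact_mod_cast hVp p
        _ = 1/4 := hεval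
    have hsplit : ∑ S : Finset V, (if Vp p ⊆ S then μ S else 0)
        + ∑ S : Finset V, (if ¬ Vp p ⊆ S then μ S else 0) = 1 := by
      rw [← Finset.sum_add_distrib, ← hμ1]
      refine Finset.sum_congr rfl fun S _ => ?_
      by_cases hs : Vp p ⊆ S <;> simp [hs]
    linarith
  have key : 3/4 ≤ ∑ S : Finset V, μ S * Z S := by
    have hswap : ∑ S : Finset V, μ S * Z S
        = ∑ p : P, f p * ∑ S : Finset V, (if Vp p ⊆ S then μ S else 0) := by
      simp_rw [hZ, Finset.mul_sum, Finset.sum_filter, mul_ite, mul_zero]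
      rw [Finset.sum_comm]
      exact Finset.sum_congr rfl fun p _ => Finset.sum_congr rfl fun S _ => by
        rw [mul_comm]
    rw [hswap]
    calc (3:ℝ)/4 = ∑ p : P, f p * (1 - 1/4) := by rw [← Finset.sum_mul, hfsum]; ring
      _ ≤ ∑ p : P, f p * ∑ S : Finset V, (if Vp p ⊆ S then μ S else 0) :=
          Finset.sum_le_sum fun p _ => mul_le_mul_of_nonneg_left (hq p) (hf p)
  have final : ∀ S : Finset V, μ S * Z S ≤
      (if (1:ℝ)/2 ≤ Z S then μ S else 0) + (1/2) * (if ¬ ((1:ℝ)/2 ≤ Z S) then μ S else 0) := by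
    intro S
    by_cases hs : (1:ℝ)/2 ≤ Z S
    · simp only [hs, if_true, not_true, if_false]
      nlinarith [hμ0 S, hZle1 S]
    · simp only [hs, if_false, not_false_iff, if_true]
      nlinarith [hμ0 S, hZ0 S, not_le.mp hs]
  have hsum : ∑ S : Finset V, μ S * Z S ≤
      ∑ S : Finset V, (if (1:ℝ)/2 ≤ Z S then μ S else 0)
      + (1/2) * ∑ S : Finset V, (if ¬ ((1:ℝ)/2 ≤ Z S) then μ S else 0) := by
    rw [Finset.mul_sum, ← Finset.sum_add_distrib]
    exact Finset.sum_le_sum fun S _ => final S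
  have hsplit2 : ∑ S : Finset V, (if (1:ℝ)/2 ≤ Z S then μ S else 0)
      + ∑ S : Finset V, (if ¬ ((1:ℝ)/2 ≤ Z S) then μ S else 0) = 1 := by
    rw [← Finset.sum_add_distrib]
    calc ∑ S : Finset V, ((if (1:ℝ)/2 ≤ Z S then μ S else 0)
          + (if ¬ ((1:ℝ)/2 ≤ Z S) then μ S else 0))
        = ∑ S : Finset V, μ S := by
          refine Finset.sum_congr rfl fun S _ => ?_
          by_cases hs : (1:ℝ)/2 ≤ Z S
          · rw [if_pos hs, if_neg (not_not_intro hs), add_zero]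
          · rw [if_neg hs, if_pos hs, zero_add]
      _ = 1 := hμ1
  show (1:ℝ)/2 ≤ ∑ S : Finset V, (if (1:ℝ)/2 ≤ Z S then μ S else 0)
  linarith
end

section
/- Let G=(V,E) be a finite simple graph with a source s ∈ V and terminals t_1,…,t_r ∈ V, and let h ≥ 1, ℓ ≥ 1 be integers. Suppose H ⊆ E is an edge-minimal edge set satisfying (h,ℓ)-hop-connectivity. Then every vertex u incident to an edge of H satisfies hop_H(s,u) ≤ h, and consequently any two vertices incident to edges of H are at hop-distance at most 2h in H (H has hop-diameter at most 2h). -/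
/-- An edge set `H` satisfies `(h, ℓ)`-hop-connectivity for source `s` and terminals `t i`
if for every `i` and every `Q ⊆ H` with `|Q| < ℓ`, the graph with edge set `H \ Q`
contains an `s`–`t i` path of hop-length at most `h`. -/
def SatisfiesHopConn {V : Type*} [DecidableEq V] (s : V) {r : ℕ} (t : Fin r → V)
    (h ℓ : ℕ) (H : Finset (Sym2 V)) : Prop :=
  ∀ i : Fin r, ∀ Q ⊆ H, Q.card < ℓ →
    ∃ p : (SimpleGraph.fromEdgeSet (↑(H \ Q) : Set (Sym2 V))).Walk s (t i),
      p.IsPath ∧ p.length ≤ h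

/-- If `H ⊆ E` is an edge-minimal edge set satisfying
`(h, ℓ)`-hop-connectivity, then every vertex incident to an edge of `H` is at hop-distance
at most `h` from `s` in `H`, and consequently any two vertices incident to edges of `H`
are at hop-distance at most `2h` in `H` (`H` has hop-diameter at most `2h`). -/
theorem minimal_hop_conn_diameter
    {V : Type*} [Fintype V] [DecidableEq V] (G : SimpleGraph V)
    (s : V) {r : ℕ} (t : Fin r → V) (h ℓ : ℕ) (hh : 1 ≤ h) (hℓ : 1 ≤ ℓ)
    (H : Finset (Sym2 V)) (hHE : (↑H : Set (Sym2 V)) ⊆ G.edgeSet)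
    (hconn : SatisfiesHopConn s t h ℓ H)
    (hmin : ∀ H' : Finset (Sym2 V), H' ⊂ H → ¬ SatisfiesHopConn s t h ℓ H') :
    (∀ u : V, (∃ e ∈ H, u ∈ e) →
      ∃ p : (SimpleGraph.fromEdgeSet (↑H : Set (Sym2 V))).Walk s u, p.length ≤ h) ∧
    (∀ u v : V, (∃ e ∈ H, u ∈ e) → (∃ e ∈ H, v ∈ e) →
      ∃ p : (SimpleGraph.fromEdgeSet (↑H : Set (Sym2 V))).Walk u v, p.length ≤ 2 * h) := by
  have key : ∀ u : V, (∃ e ∈ H, u ∈ e) →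
      ∃ p : (SimpleGraph.fromEdgeSet (↑H : Set (Sym2 V))).Walk s u, p.length ≤ h := by
    rintro u ⟨e, heH, hue⟩
    have hsub : (H.erase e) ⊂ H := Finset.erase_ssubset heH
    have hnot := hmin _ hsub
    unfold SatisfiesHopConn at hnot
    push_neg at hnot
    obtain ⟨i, Q, hQsub, hQcard, hnopath⟩ := hnot
    obtain ⟨p, hp, hlen⟩ := hconn i Q (hQsub.trans (Finset.erase_subset e H)) hQcard
    -- the edge e must lie on p
    have hein : e ∈ p.edges := by
      by_contra he
      have hedges : ∀ e' ∈ p.edges,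
          e' ∈ (SimpleGraph.fromEdgeSet (↑(H.erase e \ Q) : Set (Sym2 V))).edgeSet := by
        intro e' he'
        have h1 := p.edges_subset_edgeSet he'
        rw [SimpleGraph.edgeSet_fromEdgeSet] at h1 ⊢
        rcases h1 with ⟨h1, h2⟩
        refine ⟨?_, h2⟩
        simp only [Finset.coe_sdiff, Set.mem_diff, Finset.mem_coe, Finset.mem_sdiff] at h1 ⊢
        refine ⟨Finset.mem_erase.mpr ⟨?_, h1.1⟩, h1.2⟩
        rintro rfl; exact he he'
      have := hnopath (p.transfer _ hedges) (hp.transfer hedges)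
      rw [SimpleGraph.Walk.length_transfer] at this
      omega
    have hmem : u ∈ p.support := by
      revert hue hein
      refine Sym2.ind (fun a b hue hein => ?_) e
      rcases Sym2.mem_iff.mp hue with rfl | rfl
      · exact p.fst_mem_support_of_mem_edges hein
      · exact p.snd_mem_support_of_mem_edges hein
    set q := p.takeUntil u hmem with hq
    have hqlen : q.length ≤ h := (p.length_takeUntil_le hmem).trans hlen
    have hqedges : ∀ e' ∈ q.edges,
        e' ∈ (SimpleGraph.fromEdgeSet (↑H : Set (Sym2 V))).edgeSet := by
      intro e' he'
      have h1 := q.edges_subset_edgeSet he'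
      rw [SimpleGraph.edgeSet_fromEdgeSet] at h1 ⊢
      rcases h1 with ⟨h1, h2⟩
      refine ⟨?_, h2⟩
      simp only [Finset.coe_sdiff, Set.mem_diff, Finset.mem_coe] at h1 ⊢
      exact h1.1
    exact ⟨q.transfer _ hqedges, by rwa [SimpleGraph.Walk.length_transfer]⟩
  refine ⟨key, fun u v hu hv => ?_⟩
  obtain ⟨pu, hpu⟩ := key u hu
  obtain ⟨pv, hpv⟩ := key v hv
  refine ⟨pu.reverse.append pv, ?_⟩
  rw [SimpleGraph.Walk.length_append, SimpleGraph.Walk.length_reverse]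
  omega
end

section
/- Let G=(V,E) be a finite simple graph with a source s ∈ V and terminals t_1,…,t_r ∈ V, and let h ≥ 1, ℓ ≥ 1 be integers. Let H ⊆ E be a connected edge set satisfying (h,ℓ)-hop-connectivity, and let Q ⊆ H be a violating edge set. Then the graph on the vertices incident to H with edge set H∖Q has at most two connected components, and every connected component contains s or some terminal t_i. -/
open SimpleGraph

namespace SimpleGraph

variable {V : Type*} {G : SimpleGraph V}

theorem Walk.IsTrail.reachable_deleteEdges_of_mem_edges {u v x : V} {p : G.Walk u v}
    (hp : p.IsTrail) {e : Sym2 V} (he : e ∈ p.edges) (hx : x ∈ e) :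
    (G.deleteEdges {e}).Reachable u x ∨ (G.deleteEdges {e}).Reachable v x := by
  obtain ⟨y, rfl⟩ := Sym2.mem_iff_exists.mp hx
  rw [Sym2.eq_swap] at he ⊢
  by_contra! h
  exact hp.not_mem_edges_of_not_reachable h.1 h.2 he

theorem Reachable.exists_reachable_deleteEdges_of_mem {u v : V} (huv : G.Reachable u v)
    {Q : Set (Sym2 V)} {e : Sym2 V} (he : e ∈ Q) (hv : v ∈ e) :
    ∃ e ∈ Q, ∃ x ∈ e, (G.deleteEdges Q).Reachable u x := by
  obtain ⟨p⟩ := huv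
  induction p with
  | nil => exact ⟨e, he, _, hv, .rfl⟩
  | @cons a b _ hab _ ih =>
    by_cases habQ : s(a, b) ∈ Q
    · exact ⟨_, habQ, a, Sym2.mem_mk_left a b, .rfl⟩
    · obtain ⟨e', he', x, hx, hbx⟩ := ih hv
      exact ⟨e', he', x, hx, (deleteEdges_adj.mpr ⟨hab, habQ⟩).reachable.trans hbx⟩

theorem reachable_or_reachable_or_reachable_of_reachable_or {a b u v w : V}
    (hu : G.Reachable u a ∨ G.Reachable u b) (hv : G.Reachable v a ∨ G.Reachable v b)
    (hw : G.Reachable w a ∨ G.Reachable w b) :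
    G.Reachable u v ∨ G.Reachable u w ∨ G.Reachable v w := by
  rcases hu with hu | hu <;> rcases hv with hv | hv <;> rcases hw with hw | hw <;>
    first
    | exact .inl (hu.trans hv.symm)
    | exact .inr (.inl (hu.trans hw.symm))
    | exact .inr (.inr (hv.trans hw.symm))

end SimpleGraph

section HopConnectivity

variable {V : Type*} [DecidableEq V] {s : V} {r : ℕ} {t : Fin r → V} {h ℓ : ℕ}
  {H Q : Finset (Sym2 V)} {i : Fin r}

theorem SatisfiesHopConn.nonempty_of_violating (hconn : SatisfiesHopConn s t h ℓ H) (hℓ : 1 ≤ ℓ)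
    (hi : ¬ ∃ p : (fromEdgeSet (↑(H \ Q) : Set (Sym2 V))).Walk s (t i),
      p.IsPath ∧ p.length ≤ h) :
    Q.Nonempty := by
  rw [Finset.nonempty_iff_ne_empty]
  rintro rfl
  exact hi (hconn i ∅ (Finset.empty_subset H) hℓ)

theorem SatisfiesHopConn.reachable_of_mem_violating (hconn : SatisfiesHopConn s t h ℓ H)
    (hQH : Q ⊆ H) (hQcard : Q.card ≤ ℓ)
    (hi : ¬ ∃ p : (fromEdgeSet (↑(H \ Q) : Set (Sym2 V))).Walk s (t i),
      p.IsPath ∧ p.length ≤ h)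
    {q : Sym2 V} (hq : q ∈ Q) {x : V} (hx : x ∈ q) :
    (fromEdgeSet (↑(H \ Q) : Set (Sym2 V))).Reachable s x ∨
      (fromEdgeSet (↑(H \ Q) : Set (Sym2 V))).Reachable (t i) x := by
  have hcard : (Q.erase q).card < ℓ := by
    rw [Finset.card_erase_of_mem hq]
    have := Finset.card_pos.mpr ⟨q, hq⟩
    omega
  obtain ⟨p, hp, hlen⟩ := hconn i (Q.erase q) ((Finset.erase_subset q Q).trans hQH) hcard
  have hdel : (fromEdgeSet (↑(H \ Q.erase q) : Set (Sym2 V))).deleteEdges {q} =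
      fromEdgeSet ↑(H \ Q) := by
    rw [deleteEdges_fromEdgeSet]
    congr 1
    ext e
    by_cases e = q <;> simp_all
  by_cases hqp : q ∈ p.edges
  · rw [← hdel]
    exact hp.isTrail.reachable_deleteEdges_of_mem_edges hqp hx
  · have hp' : ∀ e ∈ p.edges, e ∈ (fromEdgeSet (↑(H \ Q) : Set (Sym2 V))).edgeSet := by
      intro e he
      rw [← hdel, edgeSet_deleteEdges]
      exact ⟨p.edges_subset_edgeSet he, fun heq => hqp (Set.mem_singleton_iff.mp heq ▸ he)⟩
    exact (hi ⟨p.transfer _ hp', hp.transfer hp', (p.length_transfer hp').trans_le hlen⟩).elim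

theorem SatisfiesHopConn.reachable_of_incident (hconn : SatisfiesHopConn s t h ℓ H) (hℓ : 1 ≤ ℓ)
    (hHconn : ∀ u v : V, (∃ e ∈ H, u ∈ e) → (∃ e ∈ H, v ∈ e) →
      (fromEdgeSet (↑H : Set (Sym2 V))).Reachable u v)
    (hQH : Q ⊆ H) (hQcard : Q.card ≤ ℓ)
    (hi : ¬ ∃ p : (fromEdgeSet (↑(H \ Q) : Set (Sym2 V))).Walk s (t i),
      p.IsPath ∧ p.length ≤ h)
    {u : V} (hu : ∃ e ∈ H, u ∈ e) :
    (fromEdgeSet (↑(H \ Q) : Set (Sym2 V))).Reachable u s ∨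
      (fromEdgeSet (↑(H \ Q) : Set (Sym2 V))).Reachable u (t i) := by
  obtain ⟨q, hq⟩ := hconn.nonempty_of_violating hℓ hi
  obtain ⟨e, he, x, hx, hux⟩ :=
    (hHconn u q.out.1 hu ⟨q, hQH hq, q.out_fst_mem⟩).exists_reachable_deleteEdges_of_mem
      (Finset.mem_coe.mpr hq) q.out_fst_mem
  rw [deleteEdges_fromEdgeSet, ← Finset.coe_sdiff] at hux
  exact (hconn.reachable_of_mem_violating hQH hQcard hi he hx).imp
    (fun hsx => hux.trans hsx.symm) (fun htx => hux.trans htx.symm)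

end HopConnectivity

theorem violating_set_two_components_general
    {V : Type*} [DecidableEq V]
    (s : V) {r : ℕ} (t : Fin r → V) (h ℓ : ℕ) (hℓ : 1 ≤ ℓ)
    (H : Finset (Sym2 V))
    -- H is connected: any two vertices incident to H are joined in H
    (hHconn : ∀ u v : V, (∃ e ∈ H, u ∈ e) → (∃ e ∈ H, v ∈ e) →
      (SimpleGraph.fromEdgeSet (↑H : Set (Sym2 V))).Reachable u v)
    (hconn : SatisfiesHopConn s t h ℓ H)
    -- Q is a violating edge set
    (Q : Finset (Sym2 V)) (hQH : Q ⊆ H) (hQcard : Q.card ≤ ℓ)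
    (hviol : ∃ i : Fin r,
      ¬ ∃ p : (SimpleGraph.fromEdgeSet (↑(H \ Q) : Set (Sym2 V))).Walk s (t i),
          p.IsPath ∧ p.length ≤ h) :
    -- at most two connected components
    (∀ u v w : V, (∃ e ∈ H, u ∈ e) → (∃ e ∈ H, v ∈ e) → (∃ e ∈ H, w ∈ e) →
      (SimpleGraph.fromEdgeSet (↑(H \ Q) : Set (Sym2 V))).Reachable u v ∨
      (SimpleGraph.fromEdgeSet (↑(H \ Q) : Set (Sym2 V))).Reachable u w ∨
      (SimpleGraph.fromEdgeSet (↑(H \ Q) : Set (Sym2 V))).Reachable v w) ∧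
    -- every component contains s or a terminal
    (∀ u : V, (∃ e ∈ H, u ∈ e) →
      (SimpleGraph.fromEdgeSet (↑(H \ Q) : Set (Sym2 V))).Reachable u s ∨
      ∃ i : Fin r, (SimpleGraph.fromEdgeSet (↑(H \ Q) : Set (Sym2 V))).Reachable u (t i)) := by
  obtain ⟨i, hi⟩ := hviol
  have reaches := fun u (hu : ∃ e ∈ H, u ∈ e) =>
    hconn.reachable_of_incident hℓ hHconn hQH hQcard hi hu
  exact ⟨fun u v w hu hv hw =>
      reachable_or_reachable_or_reachable_of_reachable_or (reaches u hu) (reaches v hv)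
        (reaches w hw),
    fun u hu => (reaches u hu).imp_right fun hut => ⟨i, hut⟩⟩

/-- Let `H` be a connected edge set satisfying `(h, ℓ)`-hop-connectivity
and let `Q ⊆ H` be a violating edge set.  Then the graph on the vertices incident to `H`
with edge set `H \ Q` has at most two connected components (among any three vertices
incident to `H`, two are joined in `H \ Q`), and every connected component contains `s`
or some terminal `t i` (every vertex incident to `H` reaches `s` or some `t i`). -/
theorem violating_set_two_components
    {V : Type*} [Fintype V] [DecidableEq V] (G : SimpleGraph V)
    (s : V) {r : ℕ} (t : Fin r → V) (h ℓ : ℕ) (hh : 1 ≤ h) (hℓ : 1 ≤ ℓ)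
    (H : Finset (Sym2 V)) (hHE : (↑H : Set (Sym2 V)) ⊆ G.edgeSet)
    -- H is connected: any two vertices incident to H are joined in H
    (hHconn : ∀ u v : V, (∃ e ∈ H, u ∈ e) → (∃ e ∈ H, v ∈ e) →
      (SimpleGraph.fromEdgeSet (↑H : Set (Sym2 V))).Reachable u v)
    (hconn : SatisfiesHopConn s t h ℓ H)
    -- Q is a violating edge set
    (Q : Finset (Sym2 V)) (hQH : Q ⊆ H) (hQcard : Q.card ≤ ℓ)
    (hviol : ∃ i : Fin r,
      ¬ ∃ p : (SimpleGraph.fromEdgeSet (↑(H \ Q) : Set (Sym2 V))).Walk s (t i),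
          p.IsPath ∧ p.length ≤ h) :
    -- at most two connected components
    (∀ u v w : V, (∃ e ∈ H, u ∈ e) → (∃ e ∈ H, v ∈ e) → (∃ e ∈ H, w ∈ e) →
      (SimpleGraph.fromEdgeSet (↑(H \ Q) : Set (Sym2 V))).Reachable u v ∨
      (SimpleGraph.fromEdgeSet (↑(H \ Q) : Set (Sym2 V))).Reachable u w ∨
      (SimpleGraph.fromEdgeSet (↑(H \ Q) : Set (Sym2 V))).Reachable v w) ∧
    -- every component contains s or a terminal
    (∀ u : V, (∃ e ∈ H, u ∈ e) →
      (SimpleGraph.fromEdgeSet (↑(H \ Q) : Set (Sym2 V))).Reachable u s ∨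
      ∃ i : Fin r, (SimpleGraph.fromEdgeSet (↑(H \ Q) : Set (Sym2 V))).Reachable u (t i)) :=
  violating_set_two_components_general s t h ℓ hℓ H hHconn hconn Q hQH hQcard hviol
end

section
/- Let H be a finite simple connected graph with hop-diameter at most D, let ℓ ≥ 1 be an integer, and let Q be a set of at most ℓ edges of H. Then every connected component of H∖Q has hop-diameter at most (4ℓ+2)·D. -/
/-!
Let `p` be a shortest path in `H \ Q` and mark its vertices at positions `0, 2D, 4D, …`.
Consecutive marks are more than `D` apart in `H \ Q` but at most `D` apart in `H`, so a shortest
`H`-path between them uses an edge of `Q`, and its part before the first such edge brings the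
earlier mark to within distance `< D` of an endpoint of `Q` in `H \ Q`. Distinct marks are at
least `2D` apart in `H \ Q`, so no endpoint serves two marks. Hence at most `2ℓ` marks have a
successor, and `p` is shorter than `2D (2ℓ + 1)`.
-/

open Finset

namespace SimpleGraph

variable {V : Type*}

theorem Walk.dist_getVert_getVert_of_length_eq_dist {G : SimpleGraph V} {u v : V}
    (p : G.Walk u v) (hp : p.length = G.dist u v) {a b : ℕ} (hab : a ≤ b) (hb : b ≤ p.length) :
    G.dist (p.getVert a) (p.getVert b) = b - a := by
  have hend : (p.drop a).getVert (b - a) = p.getVert b := by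
    rw [Walk.drop_getVert, Nat.add_sub_cancel' hab]
  have hsub : (((p.drop a).take (b - a)).copy rfl hend).IsSubwalk p := by
    simpa using (((p.drop a).isSubwalk_take (b - a)).trans (p.isSubwalk_drop a)).copy
      rfl hend rfl rfl
  rw [← length_eq_dist_of_subwalk hp hsub, Walk.length_copy, Walk.take_length, Walk.drop_length]
  omega

theorem Walk.exists_deleteEdges_walk_or_walk_to_mem {G : SimpleGraph V} (Q : Set (Sym2 V))
    {x y : V} (w : G.Walk x y) :
    (∃ q : (G.deleteEdges Q).Walk x y, q.length ≤ w.length) ∨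
      ∃ e ∈ Q, ∃ z ∈ e, ∃ q : (G.deleteEdges Q).Walk x z, q.length < w.length := by
  induction w with
  | nil => exact .inl ⟨.nil, le_rfl⟩
  | @cons x x' y hadj w ih =>
    by_cases hQ : s(x, x') ∈ Q
    · exact .inr ⟨_, hQ, x, Sym2.mem_mk_left x x', .nil, by simp⟩
    have hadj' : (G.deleteEdges Q).Adj x x' := (deleteEdges_adj ..).2 ⟨hadj, hQ⟩
    rcases ih with ⟨q, hq⟩ | ⟨e, he, z, hz, q, hq⟩
    · exact .inl ⟨q.cons hadj', by simpa using hq⟩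
    · exact .inr ⟨e, he, z, hz, q.cons hadj', by simpa using hq⟩

theorem exists_deleteEdges_walk_to_mem_of_lt_dist {H : SimpleGraph V} (Q : Set (Sym2 V))
    {D : ℕ} (hdiam : ∀ x y, H.dist x y ≤ D) {x y : V} (hxy : D < (H.deleteEdges Q).dist x y) :
    ∃ e ∈ Q, ∃ z ∈ e, ∃ q : (H.deleteEdges Q).Walk x z, q.length < D := by
  have hreach : H.Reachable x y :=
    (Reachable.of_dist_ne_zero (by omega)).mono (H.deleteEdges_le Q)
  obtain ⟨w, hw⟩ := hreach.exists_walk_length_eq_dist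
  have hwD : w.length ≤ D := hw ▸ hdiam x y
  rcases w.exists_deleteEdges_walk_or_walk_to_mem Q with ⟨q, hq⟩ | ⟨e, he, z, hz, q, hq⟩
  · have := dist_le q
    omega
  · exact ⟨e, he, z, hz, q, by omega⟩

theorem dist_le_of_forall_lt_dist_exists_walk_lt {G : SimpleGraph V} (S : Finset V) {D : ℕ}
    (hnear : ∀ x y, D < G.dist x y → ∃ z ∈ S, ∃ q : G.Walk x z, q.length < D) (u v : V) :
    G.dist u v ≤ 2 * D * (#S + 1) := by
  obtain hzero | hpos := Nat.eq_zero_or_pos (G.dist u v)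
  · simp [hzero]
  have hD : 0 < D := by
    by_contra! hD
    obtain ⟨_, _, q, hq⟩ := hnear u v (by omega)
    omega
  obtain ⟨p, hp⟩ := (Reachable.of_dist_ne_zero hpos.ne').exists_walk_length_eq_dist
  set t := p.length / (2 * D)
  set m : ℕ → V := fun i ↦ p.getVert (2 * D * i)
  have hdist : ∀ i j, i ≤ j → j ≤ t → G.dist (m i) (m j) = 2 * D * j - 2 * D * i := fun i j hij hjt ↦
    p.dist_getVert_getVert_of_length_eq_dist hp (Nat.mul_le_mul_left _ hij)
      ((Nat.mul_le_mul_left _ hjt).trans (Nat.mul_div_le _ _))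
  have hmarks : ∀ i < t, ∃ z ∈ S, ∃ q : G.Walk (m i) z, q.length < D := fun i hi ↦
    hnear _ (m (i + 1)) (by rw [hdist i (i + 1) (by omega) hi, Nat.mul_succ]; omega)
  have : Nonempty V := ⟨u⟩
  choose! z hzS hz using hmarks
  have hne : ∀ i j, i < j → j < t → z i ≠ z j := by
    intro i j hij hjt hzij
    obtain ⟨qi, hqi⟩ := hz i (by omega)
    obtain ⟨qj, hqj⟩ := hz j hjt
    have hfar : 2 * D ≤ G.dist (m i) (m j) := by
      rw [hdist i j hij.le hjt.le, ← Nat.mul_sub]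
      exact Nat.le_mul_of_pos_right _ (by omega)
    have hclose := dist_le (qi.append (qj.copy rfl hzij.symm).reverse)
    simp only [Walk.length_append, Walk.length_reverse, Walk.length_copy] at hclose
    omega
  have hinj : Set.InjOn z (range t) := by
    intro i hi j hj hzij
    simp only [coe_range, Set.mem_Iio] at hi hj
    rcases lt_trichotomy i j with hij | hij | hij
    · exact absurd hzij (hne i j hij hj)
    · exact hij
    · exact absurd hzij.symm (hne j i hij hi)
  have ht : t ≤ #S := by
    simpa using card_le_card_of_injOn z (fun i hi ↦ hzS i (by simpa using hi)) hinj
  calc G.dist u v = p.length := hp.symm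
    _ ≤ 2 * D * (t + 1) := (Nat.lt_mul_div_succ _ (by omega)).le
    _ ≤ 2 * D * (#S + 1) := by gcongr

theorem card_biUnion_toFinset_le [DecidableEq V] (Q : Finset (Sym2 V)) :
    #(Q.biUnion Sym2.toFinset) ≤ 2 * #Q := by
  rw [mul_comm]
  refine card_biUnion_le_card_mul _ _ _ fun e _ ↦ ?_
  rw [Sym2.card_toFinset]
  split_ifs <;> omega

end SimpleGraph

open SimpleGraph in
theorem component_diameter_after_edge_deletion_general
    {V : Type*} (H : SimpleGraph V)
    (D : ℕ) (hdiam : ∀ u v : V, H.dist u v ≤ D)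
    (ℓ : ℕ)
    (Q : Finset (Sym2 V)) (hQcard : Q.card ≤ ℓ) :
    ∀ u v : V, (H.deleteEdges (↑Q : Set (Sym2 V))).Reachable u v →
      (H.deleteEdges (↑Q : Set (Sym2 V))).dist u v ≤ (4 * ℓ + 2) * D := by
  classical
  intro u v _
  have hnear : ∀ x y, D < (H.deleteEdges ↑Q).dist x y →
      ∃ z ∈ Q.biUnion Sym2.toFinset, ∃ q : (H.deleteEdges ↑Q).Walk x z, q.length < D := by
    intro x y hxy
    obtain ⟨e, he, z, hz, q, hq⟩ := exists_deleteEdges_walk_to_mem_of_lt_dist (↑Q) hdiam hxy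
    exact ⟨z, mem_biUnion.2 ⟨e, he, Sym2.mem_toFinset.2 hz⟩, q, hq⟩
  calc _ ≤ 2 * D * (#(Q.biUnion Sym2.toFinset) + 1) :=
        dist_le_of_forall_lt_dist_exists_walk_lt _ hnear u v
    _ ≤ 2 * D * (2 * ℓ + 1) := by
        have := card_biUnion_toFinset_le Q
        gcongr
        omega
    _ = (4 * ℓ + 2) * D := by ring

/-- Let `H` be a finite connected graph with hop-diameter at most `D`,
let `ℓ ≥ 1`, and let `Q` be a set of at most `ℓ` edges of `H`.  Then every connected
component of `H \ Q` has hop-diameter at most `(4ℓ + 2) · D`: any two vertices that are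
reachable from each other in `H \ Q` are at distance at most `(4ℓ + 2) · D` there. -/
theorem component_diameter_after_edge_deletion
    {V : Type*} [Fintype V] [DecidableEq V] (H : SimpleGraph V)
    (hconn : H.Connected) (D : ℕ) (hdiam : ∀ u v : V, H.dist u v ≤ D)
    (ℓ : ℕ) (hℓ : 1 ≤ ℓ)
    (Q : Finset (Sym2 V)) (hQE : (↑Q : Set (Sym2 V)) ⊆ H.edgeSet) (hQcard : Q.card ≤ ℓ) :
    ∀ u v : V, (H.deleteEdges (↑Q : Set (Sym2 V))).Reachable u v →
      (H.deleteEdges (↑Q : Set (Sym2 V))).dist u v ≤ (4 * ℓ + 2) * D :=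
  component_diameter_after_edge_deletion_general H D hdiam ℓ Q hQcard
end

section
/- Let G be a finite simple graph with vertices s,t and let h ≥ 1 be an integer. Let C ⊆ E(G) be an edge-minimal (h,2)-hop-connecting set for (s,t). Then for every vertex v incident to an edge of C, there exists a simple s–t path in C of hop-length at most h that passes through v. -/
/-- Vertices `s` and `t` are `(h, 2)`-hop-connected in the edge set `C`: for every set `Q`
of fewer than `2` edges of `C`, the graph with edge set `C \ Q` contains an `s`–`t` path
of hop-length at most `h`. -/
def IsHopConn2 {V : Type*} [DecidableEq V] (s t : V) (h : ℕ) (C : Finset (Sym2 V)) : Prop :=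
  ∀ Q ⊆ C, Q.card < 2 →
    ∃ p : (SimpleGraph.fromEdgeSet (↑(C \ Q) : Set (Sym2 V))).Walk s t,
      p.IsPath ∧ p.length ≤ h

/-- Let `C` be an edge-minimal `(h, 2)`-hop-connecting set for `(s, t)`.
Then for every vertex `v` incident to an edge of `C`, there exists a simple `s`–`t` path
in `C` of hop-length at most `h` passing through `v`. -/
theorem minimal_two_hop_conn_path_through_vertex
    {V : Type*} [Fintype V] [DecidableEq V] (G : SimpleGraph V)
    (s t : V) (h : ℕ) (hh : 1 ≤ h)
    (C : Finset (Sym2 V)) (hCE : (↑C : Set (Sym2 V)) ⊆ G.edgeSet)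
    (hconn : IsHopConn2 s t h C)
    (hmin : ∀ C' : Finset (Sym2 V), C' ⊂ C → ¬ IsHopConn2 s t h C') :
    ∀ v : V, (∃ e ∈ C, v ∈ e) →
      ∃ p : (SimpleGraph.fromEdgeSet (↑C : Set (Sym2 V))).Walk s t,
        p.IsPath ∧ p.length ≤ h ∧ v ∈ p.support := by
  rintro v ⟨e, heC, hve⟩
  -- C.erase e is not hop-connecting
  have hsub : C.erase e ⊂ C := Finset.erase_ssubset heC
  have hnot := hmin (C.erase e) hsub
  rw [IsHopConn2] at hnot
  push_neg at hnot
  obtain ⟨Q, hQsub, hQcard, hQno⟩ := hnot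
  obtain ⟨p, hp, hlen⟩ := hconn Q (hQsub.trans (Finset.erase_subset e C)) hQcard
  -- e must be an edge of p
  have hedges : ∀ f ∈ p.edges, f ∈ (SimpleGraph.fromEdgeSet (↑(C \ Q) : Set (Sym2 V))).edgeSet :=
    fun f hf => p.edges_subset_edgeSet hf
  have hee : e ∈ p.edges := by
    by_contra hne
    have hedges' : ∀ f ∈ p.edges,
        f ∈ (SimpleGraph.fromEdgeSet (↑(C.erase e \ Q) : Set (Sym2 V))).edgeSet := by
      intro f hf
      have := hedges f hf
      rw [SimpleGraph.edgeSet_fromEdgeSet] at this ⊢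
      refine ⟨?_, this.2⟩
      have hfc : f ∈ C \ Q := by exact_mod_cast this.1
      rw [Finset.mem_sdiff] at hfc
      have : f ∈ C.erase e \ Q :=
        Finset.mem_sdiff.2 ⟨Finset.mem_erase.2 ⟨fun hfe => hne (hfe ▸ hf), hfc.1⟩, hfc.2⟩
      exact_mod_cast this
    have := hQno (p.transfer _ hedges') (hp.transfer hedges')
    rw [SimpleGraph.Walk.length_transfer] at this
    exact absurd hlen (not_le.2 this)
  -- v is on the support of p
  have hvsup : v ∈ p.support := by
    induction e with
    | h a b =>
      rcases Sym2.mem_iff.1 hve with rfl | rfl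
      · exact SimpleGraph.Walk.fst_mem_support_of_mem_edges p hee
      · exact SimpleGraph.Walk.snd_mem_support_of_mem_edges p hee
  -- transfer p to fromEdgeSet C
  have hedgesC : ∀ f ∈ p.edges,
      f ∈ (SimpleGraph.fromEdgeSet (↑C : Set (Sym2 V))).edgeSet := by
    intro f hf
    have := hedges f hf
    rw [SimpleGraph.edgeSet_fromEdgeSet] at this ⊢
    refine ⟨?_, this.2⟩
    have hfc : f ∈ C \ Q := by exact_mod_cast this.1
    exact_mod_cast (Finset.mem_sdiff.1 hfc).1
  exact ⟨p.transfer _ hedgesC, hp.transfer hedgesC,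
    by rw [SimpleGraph.Walk.length_transfer]; exact hlen,
    by rw [SimpleGraph.Walk.support_transfer]; exact hvsup⟩
end

section
/- Let G be a finite simple graph with vertices s,t and let h ≥ 1 be an integer. Let C ⊆ E(G) be an edge-minimal (h,2)-hop-connecting set for (s,t). Then the subgraph formed by C has hop-diameter at most h: any two vertices incident to edges of C are joined by a path in C of hop-length at most h. -/
private lemma mem_support_of_mem_edges_aux {V : Type*} {G : SimpleGraph V} {a b : V}
    (p : G.Walk a b) {e : Sym2 V} {u : V} (he : e ∈ p.edges) (hu : u ∈ e) :
    u ∈ p.support := by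
  revert he hu
  induction e using Sym2.ind with
  | _ x y =>
    intro he hu
    rcases Sym2.mem_iff.mp hu with rfl | rfl
    · exact p.fst_mem_support_of_mem_edges he
    · exact p.snd_mem_support_of_mem_edges he

/-- Let `C` be an edge-minimal `(h, 2)`-hop-connecting set for `(s, t)`.
Then the subgraph formed by `C` has hop-diameter at most `h`: any two vertices incident
to edges of `C` are joined by a path in `C` of hop-length at most `h`. -/
theorem minimal_two_hop_conn_diameter
    {V : Type*} [Fintype V] [DecidableEq V] (G : SimpleGraph V)
    (s t : V) (h : ℕ) (hh : 1 ≤ h)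
    (C : Finset (Sym2 V)) (hCE : (↑C : Set (Sym2 V)) ⊆ G.edgeSet)
    (hconn : IsHopConn2 s t h C)
    (hmin : ∀ C' : Finset (Sym2 V), C' ⊂ C → ¬ IsHopConn2 s t h C') :
    ∀ u v : V, (∃ e ∈ C, u ∈ e) → (∃ e ∈ C, v ∈ e) →
      ∃ p : (SimpleGraph.fromEdgeSet (↑C : Set (Sym2 V))).Walk u v,
        p.IsPath ∧ p.length ≤ h := by
  classical
  -- Every edge of `C` lies on some `s`–`t` path of length at most `h` in `C`.
  have key : ∀ e ∈ C, ∃ p : (SimpleGraph.fromEdgeSet (↑C : Set (Sym2 V))).Walk s t,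
      p.IsPath ∧ p.length ≤ h ∧ e ∈ p.edges := by
    intro e he
    have hsub : C.erase e ⊂ C := Finset.erase_ssubset he
    have hne := hmin _ hsub
    simp only [IsHopConn2, not_forall] at hne
    obtain ⟨Q, hQsub, hQcard, hQno⟩ := hne
    push_neg at hQno
    have hQC : Q ⊆ C := hQsub.trans (Finset.erase_subset _ _)
    obtain ⟨p, hp, hlen⟩ := hconn Q hQC hQcard
    by_cases hep : e ∈ p.edges
    · -- transfer `p` up to the graph on `C`
      have htr : ∀ e' ∈ p.edges,
          e' ∈ (SimpleGraph.fromEdgeSet (↑C : Set (Sym2 V))).edgeSet := by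
        intro e' he'
        have := p.edges_subset_edgeSet he'
        rw [SimpleGraph.edgeSet_fromEdgeSet] at this ⊢
        refine ⟨?_, this.2⟩
        have : e' ∈ C \ Q := by exact_mod_cast this.1
        exact_mod_cast Finset.sdiff_subset this
      refine ⟨p.transfer _ htr, hp.transfer htr, ?_, ?_⟩
      · rw [SimpleGraph.Walk.length_transfer]; exact hlen
      · rw [SimpleGraph.Walk.edges_transfer]; exact hep
    · -- otherwise `p` survives in `(C.erase e) \ Q`, contradicting minimality
      exfalso
      have htr : ∀ e' ∈ p.edges,
          e' ∈ (SimpleGraph.fromEdgeSet (↑(C.erase e \ Q) : Set (Sym2 V))).edgeSet := by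
        intro e' he'
        have hmem := p.edges_subset_edgeSet he'
        rw [SimpleGraph.edgeSet_fromEdgeSet] at hmem ⊢
        refine ⟨?_, hmem.2⟩
        have h1 : e' ∈ C \ Q := by exact_mod_cast hmem.1
        have hne' : e' ≠ e := fun hEq => hep (hEq ▸ he')
        have : e' ∈ C.erase e \ Q := by
          rw [Finset.mem_sdiff] at h1 ⊢
          exact ⟨Finset.mem_erase.mpr ⟨hne', h1.1⟩, h1.2⟩
        exact_mod_cast this
      have := hQno (p.transfer _ htr) (hp.transfer htr)
      rw [SimpleGraph.Walk.length_transfer] at this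
      omega
  rintro u v ⟨eu, heuC, hueu⟩ ⟨ev, hevC, hvev⟩
  obtain ⟨P, hP, hPlen, hePu⟩ := key eu heuC
  obtain ⟨R, hR, hRlen, heRv⟩ := key ev hevC
  have huP : u ∈ P.support := mem_support_of_mem_edges_aux P hePu hueu
  have hvR : v ∈ R.support := mem_support_of_mem_edges_aux R heRv hvev
  have hsplitP : (P.takeUntil u huP).length + (P.dropUntil u huP).length = P.length := by
    have := congr_arg SimpleGraph.Walk.length (P.take_spec huP)
    rwa [SimpleGraph.Walk.length_append] at this
  have hsplitR : (R.takeUntil v hvR).length + (R.dropUntil v hvR).length = R.length := by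
    have := congr_arg SimpleGraph.Walk.length (R.take_spec hvR)
    rwa [SimpleGraph.Walk.length_append] at this
  by_cases hcase : (P.takeUntil u huP).length + (R.takeUntil v hvR).length ≤ h
  · -- go `u → s → v`
    let w := (P.takeUntil u huP).reverse.append (R.takeUntil v hvR)
    refine ⟨w.bypass, w.bypass_isPath, le_trans w.length_bypass_le ?_⟩
    have : w.length = (P.takeUntil u huP).length + (R.takeUntil v hvR).length := by
      simp [w, SimpleGraph.Walk.length_append, SimpleGraph.Walk.length_reverse]
    omega
  · -- go `u → t → v`
    let w := (P.dropUntil u huP).append (R.dropUntil v hvR).reverse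
    refine ⟨w.bypass, w.bypass_isPath, le_trans w.length_bypass_le ?_⟩
    have : w.length = (P.dropUntil u huP).length + (R.dropUntil v hvR).length := by
      simp [w, SimpleGraph.Walk.length_append, SimpleGraph.Walk.length_reverse]
    omega
end

section
/- Let G be a finite simple graph with vertices s,t and let h ≥ 1 be an integer. Let C ⊆ E(G) be an edge-minimal (h,2)-hop-connecting set for (s,t). Then the subgraph formed by C is 2-edge-connected: for every edge e ∈ C, any two vertices incident to edges of C remain connected in the graph with edge set C∖{e}. -/
/-- A vertex of an edge of a walk lies on the walk. -/
lemma aux_mem_support_of_mem_edge {V : Type*} {G : SimpleGraph V} {a b u : V} {p : G.Walk a b}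
    {e : Sym2 V} (he : e ∈ p.edges) (hu : u ∈ e) : u ∈ p.support := by
  induction e with
  | _ x y =>
    rcases Sym2.mem_iff.mp hu with rfl | rfl
    · exact p.fst_mem_support_of_mem_edges he
    · exact p.snd_mem_support_of_mem_edges he

/-- Segment lemma: given a trail from `a` to `b` through `u` in `fromEdgeSet S`, after deleting
any single edge `e`, either the initial segment to `u` or the final segment from `u` survives. -/
lemma aux_segment {V : Type*} [DecidableEq V] {S : Set (Sym2 V)} {a b u : V}
    (p : (SimpleGraph.fromEdgeSet S).Walk a b) (hnd : p.edges.Nodup)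
    (hu : u ∈ p.support) (e : Sym2 V) :
    (SimpleGraph.fromEdgeSet (S \ {e})).Reachable a u ∨
      (SimpleGraph.fromEdgeSet (S \ {e})).Reachable u b := by
  set p1 := p.takeUntil u hu with hp1
  set p2 := p.dropUntil u hu with hp2
  have hspec : p1.append p2 = p := p.take_spec hu
  have hedges : p.edges = p1.edges ++ p2.edges := by
    rw [← hspec, SimpleGraph.Walk.edges_append]
  rw [hedges] at hnd
  have hmemS : ∀ e' ∈ p.edges, e' ∈ S ∧ ¬ e'.IsDiag := by
    intro e' he'
    have := p.edges_subset_edgeSet he'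
    rw [SimpleGraph.edgeSet_fromEdgeSet] at this
    exact this
  by_cases hcase : e ∈ p1.edges
  · right
    have hne : e ∉ p2.edges := fun h2 => (List.disjoint_of_nodup_append hnd) hcase h2
    refine ⟨p2.transfer _ fun e' he' => ?_⟩
    have hmem : e' ∈ p.edges := by rw [hedges]; exact List.mem_append_right _ he'
    have := hmemS e' hmem
    rw [SimpleGraph.edgeSet_fromEdgeSet]
    exact ⟨⟨this.1, fun heq => hne (heq ▸ he')⟩, this.2⟩
  · left
    refine ⟨p1.transfer _ fun e' he' => ?_⟩
    have hmem : e' ∈ p.edges := by rw [hedges]; exact List.mem_append_left _ he'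
    have := hmemS e' hmem
    rw [SimpleGraph.edgeSet_fromEdgeSet]
    exact ⟨⟨this.1, fun heq => hcase (heq ▸ he')⟩, this.2⟩

/-- Key consequence of minimality: every edge `f` of `C` lies on some short `s`–`t` path
that avoids some other edge `q` of `C`. -/
lemma aux_key {V : Type*} [DecidableEq V] {s t : V} {h : ℕ} {C : Finset (Sym2 V)}
    (hconn : IsHopConn2 s t h C)
    (hmin : ∀ C' : Finset (Sym2 V), C' ⊂ C → ¬ IsHopConn2 s t h C') :
    ∀ f ∈ C, ∃ q ∈ C, q ≠ f ∧
      ∃ p : (SimpleGraph.fromEdgeSet (↑(C \ {q}) : Set (Sym2 V))).Walk s t,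
        p.IsPath ∧ p.length ≤ h ∧ f ∈ p.edges := by
  intro f hf
  have hsub : C \ {f} ⊂ C :=
    Finset.sdiff_ssubset (Finset.singleton_subset_iff.mpr hf) (Finset.singleton_nonempty f)
  have hnot := hmin _ hsub
  unfold IsHopConn2 at hnot
  push_neg at hnot
  obtain ⟨Q, hQsub, hQcard, hnop⟩ := hnot
  rcases Finset.eq_empty_or_nonempty Q with rfl | hQne
  · exfalso
    obtain ⟨p, hp, hlen⟩ := hconn {f} (Finset.singleton_subset_iff.mpr hf) (by simp)
    have hGeq : SimpleGraph.fromEdgeSet (↑((C \ {f}) \ (∅ : Finset (Sym2 V))) : Set (Sym2 V)) =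
        SimpleGraph.fromEdgeSet (↑(C \ {f}) : Set (Sym2 V)) := by
      norm_num
    rw [hGeq] at hnop
    exact absurd hlen (Nat.not_le.mpr (hnop p hp))
  · have hQ1 : Q.card = 1 := le_antisymm (Nat.lt_succ_iff.mp hQcard) (Finset.card_pos.mpr hQne)
    obtain ⟨q, rfl⟩ := Finset.card_eq_one.mp hQ1
    have hq' : q ∈ C \ {f} := hQsub (Finset.mem_singleton_self q)
    have hqC : q ∈ C := (Finset.mem_sdiff.mp hq').1
    have hqf : q ≠ f := by simpa using (Finset.mem_sdiff.mp hq').2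
    obtain ⟨p, hp, hlen⟩ := hconn {q} (Finset.singleton_subset_iff.mpr hqC) (by simp)
    refine ⟨q, hqC, hqf, p, hp, hlen, ?_⟩
    by_contra hnf
    have htrans : ∀ e' ∈ p.edges,
        e' ∈ (SimpleGraph.fromEdgeSet (↑((C \ {f}) \ {q}) : Set (Sym2 V))).edgeSet := by
      intro e' he'
      have hmem := p.edges_subset_edgeSet he'
      rw [SimpleGraph.edgeSet_fromEdgeSet] at hmem ⊢
      obtain ⟨h1, h2⟩ := hmem
      simp only [Finset.coe_sdiff, Finset.coe_singleton, Set.mem_diff, Set.mem_singleton_iff,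
        Finset.mem_coe, Finset.mem_sdiff, Finset.mem_singleton] at h1 ⊢
      exact ⟨⟨⟨h1.1, fun heq => hnf (heq ▸ he')⟩, h1.2⟩, h2⟩
    have hnew := hnop (p.transfer _ htrans) (SimpleGraph.Walk.IsPath.transfer htrans hp)
    rw [SimpleGraph.Walk.length_transfer] at hnew
    exact absurd hlen (Nat.not_le.mpr hnew)

/-- Let `C` be an edge-minimal `(h, 2)`-hop-connecting set for `(s, t)`.
Then the subgraph formed by `C` is 2-edge-connected: for every edge `e ∈ C`, any two
vertices incident to edges of `C` remain connected in the graph with edge set `C \ {e}`. -/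
theorem minimal_two_hop_conn_two_edge_connected
    {V : Type*} [Fintype V] [DecidableEq V] (G : SimpleGraph V)
    (s t : V) (h : ℕ) (hh : 1 ≤ h)
    (C : Finset (Sym2 V)) (hCE : (↑C : Set (Sym2 V)) ⊆ G.edgeSet)
    (hconn : IsHopConn2 s t h C)
    (hmin : ∀ C' : Finset (Sym2 V), C' ⊂ C → ¬ IsHopConn2 s t h C') :
    ∀ e ∈ C, ∀ u v : V, (∃ e' ∈ C, u ∈ e') → (∃ e' ∈ C, v ∈ e') →
      (SimpleGraph.fromEdgeSet ((↑C : Set (Sym2 V)) \ {e})).Reachable u v := by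
  intro e he u v hu hv
  have hcoe : ∀ q : Sym2 V, (↑(C \ ({q} : Finset (Sym2 V))) : Set (Sym2 V)) = ↑C \ {q} := by
    intro q; simp [Finset.coe_sdiff]
  have hst : (SimpleGraph.fromEdgeSet ((↑C : Set (Sym2 V)) \ {e})).Reachable s t := by
    obtain ⟨p, _, _⟩ := hconn {e} (Finset.singleton_subset_iff.mpr he) (by simp)
    rw [hcoe e] at p
    exact ⟨p⟩
  have key : ∀ w : V, (∃ f ∈ C, w ∈ f) →
      (SimpleGraph.fromEdgeSet ((↑C : Set (Sym2 V)) \ {e})).Reachable s w := by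
    rintro w ⟨f, hf, hwf⟩
    obtain ⟨q, hqC, hqf, p2, hp2, hlen, hfe⟩ := aux_key hconn hmin f hf
    have hw : w ∈ p2.support := aux_mem_support_of_mem_edge hfe hwf
    have hmono : SimpleGraph.fromEdgeSet ((↑(C \ ({q} : Finset (Sym2 V))) : Set (Sym2 V)) \ {e}) ≤
        SimpleGraph.fromEdgeSet ((↑C : Set (Sym2 V)) \ {e}) := by
      apply SimpleGraph.fromEdgeSet_mono
      rw [hcoe q]
      exact Set.diff_subset_diff_left Set.diff_subset
    rcases aux_segment p2 hp2.edges_nodup hw e with h1 | h1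
    · exact h1.mono hmono
    · exact hst.trans (h1.mono hmono).symm
  exact ((key u hu).symm.trans (key v hv))
end

section
/- Let G be a finite simple graph, u a vertex of G, and ℓ ≥ 0 an integer. Then for every vertex v of B'(u,ℓ), there exists a u–v path of hop-length at most ℓ all of whose vertices and edges lie in B'(u,ℓ). -/
/-!
If `v` lies in a 2-edge-connected subgraph `H` of `G[B(u, ℓ)]` containing `u`, take a shortest
`u`–`v` path `p` in `G`. Its prefixes have length at most `ℓ`, so `p` stays in `B(u, ℓ)`, and it
is an ear of `H`: deleting one of its edges splits it into two pieces hanging off `u` and `v`.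
Hence `H ∪ p` is again 2-edge-connected, so `p` lies in `B'(u, ℓ)`.
-/

/-- The hop-ball of radius `ℓ` around `u`: vertices joined to `u` by a walk of
hop-length at most `ℓ`. -/
def hopBall {V : Type*} (G : SimpleGraph V) (u : V) (ℓ : ℕ) : Set V :=
  {v | ∃ p : G.Walk u v, p.length ≤ ℓ}

/-- A subgraph is 2-edge-connected if it is connected and remains connected after
deleting any single edge. -/
def Subgraph.TwoEdgeConnected {V : Type*} {G : SimpleGraph V} (H : G.Subgraph) : Prop :=
  H.Connected ∧ ∀ e ∈ H.edgeSet, (H.deleteEdges {e}).Connected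

/-- `B'(u, ℓ)`: the maximal 2-edge-connected subgraph of `G[B(u, ℓ)]` containing `u`,
i.e. the union of all 2-edge-connected subgraphs of the ball-induced subgraph that
contain `u`. -/
noncomputable def maxTwoEdgeConnBall {V : Type*} (G : SimpleGraph V) (u : V) (ℓ : ℕ) :
    G.Subgraph :=
  sSup {H : G.Subgraph | H.verts ⊆ hopBall G u ℓ ∧ u ∈ H.verts ∧ Subgraph.TwoEdgeConnected H}

open SimpleGraph

section

variable {V : Type*} {G : SimpleGraph V}

namespace SimpleGraph

lemma Walk.exists_eq_append_cons_of_mem_edges {u v : V} (p : G.Walk u v) {e : Sym2 V}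
    (he : e ∈ p.edges) :
    ∃ (x y : V) (h : G.Adj x y) (q₁ : G.Walk u x) (q₂ : G.Walk y v),
      e = s(x, y) ∧ p = q₁.append (cons h q₂) := by
  induction p with
  | nil => simp at he
  | @cons a b c h p ih =>
    rcases List.mem_cons.1 (Walk.edges_cons h p ▸ he) with rfl | he
    · exact ⟨a, b, h, nil, p, rfl, rfl⟩
    · obtain ⟨x, y, hxy, q₁, q₂, rfl, rfl⟩ := ih he
      exact ⟨x, y, hxy, cons h q₁, q₂, rfl, rfl⟩

lemma Walk.mem_hopBall_of_mem_support {u v w : V} {ℓ : ℕ} (p : G.Walk u v)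
    (hp : p.length ≤ ℓ) (hw : w ∈ p.support) : w ∈ hopBall G u ℓ := by
  obtain ⟨q, r, rfl⟩ := p.mem_support_iff_exists_append.1 hw
  exact ⟨q, le_trans (by simp) hp⟩

lemma Walk.exists_walk_spanningCoe_of_toSubgraph_le {u v : V} (p : G.Walk u v)
    {H : G.Subgraph} (hp : p.toSubgraph ≤ H) :
    ∃ q : H.spanningCoe.Walk u v, q.length = p.length ∧ q.support = p.support :=
  ⟨p.transfer _ fun _ he ↦ Subgraph.edgeSet_mono hp (p.mem_edges_toSubgraph.2 he),
    p.length_transfer _, p.support_transfer _⟩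

namespace Subgraph

lemma deleteEdges_sup (H K : G.Subgraph) (s : Set (Sym2 V)) :
    (H ⊔ K).deleteEdges s = H.deleteEdges s ⊔ K.deleteEdges s := by
  ext <;> simp [or_and_right]

lemma deleteEdges_singleton_eq_self {H : G.Subgraph} {e : Sym2 V} (he : e ∉ H.edgeSet) :
    H.deleteEdges {e} = H := by
  rw [← deleteEdges_inter_edgeSet_left_eq, Set.inter_singleton_eq_empty.2 he,
    deleteEdges_empty_eq]

lemma Connected.sup_of_verts_subset {H K : G.Subgraph} (hH : H.Connected)
    (hK : K.verts ⊆ H.verts) : (H ⊔ K).Connected :=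
  hH.mono le_sup_left (Set.union_eq_left.2 hK).symm

lemma Connected.sup_toSubgraph {H : G.Subgraph} (hH : H.Connected) {u v : V}
    (hu : u ∈ H.verts) (p : G.Walk u v) : (H ⊔ p.toSubgraph).Connected :=
  connected_sup hH.preconnected p.toSubgraph_connected.preconnected
    ⟨u, hu, p.start_mem_verts_toSubgraph⟩

lemma Connected.sup_toSubgraph_deleteEdges {H : G.Subgraph} (hH : H.Connected) {u v : V}
    (hu : u ∈ H.verts) (hv : v ∈ H.verts) {p : G.Walk u v} (hp : p.IsTrail) (e : Sym2 V) :
    (H ⊔ p.toSubgraph.deleteEdges {e}).Connected := by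
  by_cases he : e ∈ p.edges
  swap
  · rw [deleteEdges_singleton_eq_self (by simpa using he)]
    exact hH.sup_toSubgraph hu p
  obtain ⟨x, y, h, q₁, q₂, rfl, rfl⟩ := p.exists_eq_append_cons_of_mem_edges he
  have hnodup := hp.edges_nodup
  rw [Walk.edges_append, Walk.edges_cons, List.nodup_middle, List.nodup_cons,
    List.mem_append, not_or] at hnodup
  obtain ⟨⟨he₁, he₂⟩, -⟩ := hnodup
  rw [Walk.toSubgraph_append, Walk.toSubgraph.eq_2, deleteEdges_sup, deleteEdges_sup,
    deleteEdges_singleton_eq_self (H := q₁.toSubgraph) (by simpa using he₁),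
    deleteEdges_singleton_eq_self (H := q₂.toSubgraph) (by simpa using he₂)]
  have hq : (H ⊔ q₁.toSubgraph ⊔ q₂.reverse.toSubgraph).Connected :=
    (hH.sup_toSubgraph hu q₁).sup_toSubgraph (Or.inl hv) q₂.reverse
  rw [Walk.toSubgraph_reverse] at hq
  have hxy : ((G.subgraphOfAdj h).deleteEdges {s(x, y)}).verts ⊆
      (H ⊔ q₁.toSubgraph ⊔ q₂.toSubgraph).verts := by
    rintro w (rfl | rfl)
    · exact Or.inl (Or.inr q₁.end_mem_verts_toSubgraph)
    · exact Or.inr q₂.start_mem_verts_toSubgraph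
  convert hq.sup_of_verts_subset hxy using 1
  ac_rfl

end Subgraph

end SimpleGraph

namespace Subgraph.TwoEdgeConnected

variable {H : G.Subgraph}

lemma connected_deleteEdges (hH : Subgraph.TwoEdgeConnected H) (e : Sym2 V) :
    (H.deleteEdges {e}).Connected := by
  by_cases he : e ∈ H.edgeSet
  · exact hH.2 e he
  · rw [SimpleGraph.Subgraph.deleteEdges_singleton_eq_self he]
    exact hH.1

lemma sup_toSubgraph (hH : Subgraph.TwoEdgeConnected H) {u v : V} (hu : u ∈ H.verts)
    (hv : v ∈ H.verts) {p : G.Walk u v} (hp : p.IsTrail) :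
    Subgraph.TwoEdgeConnected (H ⊔ p.toSubgraph) := by
  refine ⟨hH.1.sup_toSubgraph hu p, fun e _ ↦ ?_⟩
  rw [SimpleGraph.Subgraph.deleteEdges_sup]
  exact (hH.connected_deleteEdges e).sup_toSubgraph_deleteEdges hu hv hp e

end Subgraph.TwoEdgeConnected

variable {u : V} {ℓ : ℕ}

lemma le_maxTwoEdgeConnBall {H : G.Subgraph} (hball : H.verts ⊆ hopBall G u ℓ)
    (hu : u ∈ H.verts) (hH : Subgraph.TwoEdgeConnected H) : H ≤ maxTwoEdgeConnBall G u ℓ :=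
  le_sSup ⟨hball, hu, hH⟩

lemma exists_of_mem_maxTwoEdgeConnBall_verts {v : V}
    (hv : v ∈ (maxTwoEdgeConnBall G u ℓ).verts) :
    ∃ H : G.Subgraph, H.verts ⊆ hopBall G u ℓ ∧ u ∈ H.verts ∧ Subgraph.TwoEdgeConnected H ∧
      v ∈ H.verts := by
  rw [maxTwoEdgeConnBall, Subgraph.verts_sSup, Set.mem_iUnion₂] at hv
  obtain ⟨H, ⟨hball, hu, hH⟩, hv⟩ := hv
  exact ⟨H, hball, hu, hH, hv⟩

end

theorem maxTwoEdgeConnBall_radius_general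
    {V : Type*} (G : SimpleGraph V)
    (u : V) (ℓ : ℕ) :
    ∀ v ∈ (maxTwoEdgeConnBall G u ℓ).verts,
      ∃ p : (maxTwoEdgeConnBall G u ℓ).spanningCoe.Walk u v,
        p.length ≤ ℓ ∧ ∀ w ∈ p.support, w ∈ (maxTwoEdgeConnBall G u ℓ).verts := by
  intro v hv
  obtain ⟨H, hball, hu, hH, hvH⟩ := exists_of_mem_maxTwoEdgeConnBall_verts hv
  obtain ⟨q, hq⟩ := hball hvH
  obtain ⟨p, hp, hpdist⟩ := q.reachable.exists_path_of_dist
  have hpℓ : p.length ≤ ℓ := hpdist ▸ (dist_le q).trans hq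
  have hpB : p.toSubgraph ≤ maxTwoEdgeConnBall G u ℓ := by
    refine le_sup_right.trans (le_maxTwoEdgeConnBall (H := H ⊔ p.toSubgraph) ?_ (Or.inl hu)
      (hH.sup_toSubgraph hu hvH hp.isTrail))
    exact Set.union_subset hball fun w hw ↦
      p.mem_hopBall_of_mem_support hpℓ (p.mem_verts_toSubgraph.1 hw)
  obtain ⟨p', hlen, hsupp⟩ := p.exists_walk_spanningCoe_of_toSubgraph_le hpB
  exact ⟨p', hlen ▸ hpℓ, fun w hw ↦ hpB.1 (p.mem_verts_toSubgraph.2 (hsupp ▸ hw))⟩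

/-- For every vertex `v` of `B'(u, ℓ)` there exists a `u`–`v` path of
hop-length at most `ℓ` all of whose vertices and edges lie in `B'(u, ℓ)`. -/
theorem maxTwoEdgeConnBall_radius
    {V : Type*} [Fintype V] [DecidableEq V] (G : SimpleGraph V)
    (u : V) (ℓ : ℕ) :
    ∀ v ∈ (maxTwoEdgeConnBall G u ℓ).verts,
      ∃ p : (maxTwoEdgeConnBall G u ℓ).spanningCoe.Walk u v,
        p.length ≤ ℓ ∧ ∀ w ∈ p.support, w ∈ (maxTwoEdgeConnBall G u ℓ).verts :=
  maxTwoEdgeConnBall_radius_general G u ℓ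
end

section
/- Let G be a finite simple graph, s a vertex of G, and h ≥ 1, p ≥ 1 integers. Then for every edge e of B'(s,hp) and every vertex v of B'(s,hp), the graph B'(s,hp) with edge e deleted contains a v–s path of hop-length at most 4hp. -/
set_option linter.unusedSectionVars false

namespace JSV


open SimpleGraph

variable {V : Type*} [DecidableEq V] {G : SimpleGraph V}

lemma mem_deleteEdges_edgeSet {K : G.Subgraph} {E : Set (Sym2 V)} {f : Sym2 V} :
    f ∈ (K.deleteEdges E).edgeSet ↔ f ∈ K.edgeSet ∧ f ∉ E := by
  induction f with
  | _ x y => simp [Subgraph.mem_edgeSet, Subgraph.deleteEdges_adj]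

lemma support_subset_verts {K : G.Subgraph} {x y : V} (q : G.Walk x y)
    (hx : x ∈ K.verts) (hq : ∀ f ∈ q.edges, f ∈ K.edgeSet) :
    ∀ w ∈ q.support, w ∈ K.verts := by
  induction q with
  | nil => intro w hw; rw [Walk.support_nil, List.mem_singleton] at hw; exact hw ▸ hx
  | @cons u v y h rest ih =>
    intro w hw
    have hadj : K.Adj u v := Subgraph.mem_edgeSet.mp (hq _ (by simp [Walk.edges_cons]))
    rw [Walk.support_cons, List.mem_cons] at hw
    rcases hw with rfl | hw
    · exact hx
    · exact ih hadj.snd_mem (fun f hf => hq f (by simp [Walk.edges_cons, hf])) w hw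

lemma walk_toSubgraph_le {K : G.Subgraph} {x y : V} (q : G.Walk x y)
    (hx : x ∈ K.verts) (hq : ∀ f ∈ q.edges, f ∈ K.edgeSet) :
    q.toSubgraph ≤ K := by
  constructor
  · intro w hw
    exact support_subset_verts q hx hq w (q.mem_verts_toSubgraph.mp hw)
  · intro a b hab
    have : s(a, b) ∈ q.toSubgraph.edgeSet := Subgraph.mem_edgeSet.mpr hab
    exact Subgraph.mem_edgeSet.mp (hq _ (q.mem_edges_toSubgraph.mp this))

lemma exists_walk_of_connected {K : G.Subgraph} (hc : K.Connected) {x y : V}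
    (hx : x ∈ K.verts) (hy : y ∈ K.verts) :
    ∃ q : G.Walk x y, ∀ f ∈ q.edges, f ∈ K.edgeSet := by
  obtain ⟨-, hall⟩ := (Subgraph.connected_iff_forall_exists_walk_subgraph K).mp hc
  obtain ⟨q, hq⟩ := hall hx hy
  exact ⟨q, fun f hf => Subgraph.edgeSet_mono hq (q.mem_edges_toSubgraph.mpr hf)⟩

lemma connected_of_walks {K : G.Subgraph} {s : V} (hs : s ∈ K.verts)
    (hw : ∀ x ∈ K.verts, ∃ q : G.Walk x s, ∀ f ∈ q.edges, f ∈ K.edgeSet) :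
    K.Connected := by
  rw [Subgraph.connected_iff_forall_exists_walk_subgraph]
  refine ⟨⟨s, hs⟩, ?_⟩
  intro u v hu hv
  obtain ⟨qu, hqu⟩ := hw u hu
  obtain ⟨qv, hqv⟩ := hw v hv
  refine ⟨qu.append qv.reverse, walk_toSubgraph_le _ hu ?_⟩
  intro f hf
  rw [Walk.edges_append, List.mem_append] at hf
  rcases hf with hf | hf
  · exact hqu f hf
  · rw [Walk.edges_reverse, List.mem_reverse] at hf
    exact hqv f hf

section Bfacts

variable (G) (s : V) (n : ℕ)

lemma singleton_mem_F : G.singletonSubgraph s ∈ {H : G.Subgraph | H.verts ⊆ hopBall G s n ∧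
    s ∈ H.verts ∧ Subgraph.TwoEdgeConnected H} := by
  refine ⟨?_, ?_, ?_, ?_⟩
  · rw [singletonSubgraph_verts, Set.singleton_subset_iff]
    exact ⟨Walk.nil, by simp⟩
  · rw [singletonSubgraph_verts]; rfl
  · exact Subgraph.singletonSubgraph_connected
  · intro e he
    rw [edgeSet_singletonSubgraph] at he
    exact absurd he (Set.notMem_empty e)

lemma s_mem_B : s ∈ (maxTwoEdgeConnBall G s n).verts := by
  have h := Subgraph.verts_mono (le_sSup (singleton_mem_F G s n))
  rw [maxTwoEdgeConnBall]
  apply h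
  rw [singletonSubgraph_verts]; rfl

lemma verts_B_subset_ball : (maxTwoEdgeConnBall G s n).verts ⊆ hopBall G s n := by
  rw [maxTwoEdgeConnBall, Subgraph.verts_sSup]
  intro x hx
  rw [Set.mem_iUnion₂] at hx
  obtain ⟨H, hH, hxH⟩ := hx
  exact hH.1 hxH

lemma B_walk_avoiding (f : Sym2 V) :
    ∀ x ∈ (maxTwoEdgeConnBall G s n).verts, ∃ q : G.Walk x s,
      ∀ g ∈ q.edges, g ∈ (maxTwoEdgeConnBall G s n).edgeSet ∧ g ≠ f := by
  intro x hx
  rw [maxTwoEdgeConnBall, Subgraph.verts_sSup, Set.mem_iUnion₂] at hx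
  obtain ⟨H, hH, hxH⟩ := hx
  have hHle : H ≤ maxTwoEdgeConnBall G s n := le_sSup hH
  by_cases hf : f ∈ H.edgeSet
  · have hconn := hH.2.2.2 f hf
    obtain ⟨q, hq⟩ := exists_walk_of_connected hconn
      (by rw [Subgraph.deleteEdges_verts]; exact hxH)
      (by rw [Subgraph.deleteEdges_verts]; exact hH.2.1)
    refine ⟨q, fun g hg => ?_⟩
    obtain ⟨hg1, hg2⟩ := mem_deleteEdges_edgeSet.mp (hq g hg)
    exact ⟨Subgraph.edgeSet_mono hHle hg1, fun h => hg2 (h ▸ rfl)⟩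
  · obtain ⟨q, hq⟩ := exists_walk_of_connected hH.2.2.1 hxH hH.2.1
    refine ⟨q, fun g hg => ⟨Subgraph.edgeSet_mono hHle (hq g hg), ?_⟩⟩
    rintro rfl
    exact hf (hq g hg)

lemma B_two_ec : Subgraph.TwoEdgeConnected (maxTwoEdgeConnBall G s n) := by
  constructor
  · refine connected_of_walks (s_mem_B G s n) (fun x hx => ?_)
    obtain ⟨q, hq⟩ := B_walk_avoiding G s n s(x, x) x hx
    exact ⟨q, fun g hg => (hq g hg).1⟩
  · intro f hf
    refine connected_of_walks (s := s) ?_ (fun x hx => ?_)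
    · rw [Subgraph.deleteEdges_verts]; exact s_mem_B G s n
    · rw [Subgraph.deleteEdges_verts] at hx
      obtain ⟨q, hq⟩ := B_walk_avoiding G s n f x hx
      refine ⟨q, fun g hg => mem_deleteEdges_edgeSet.mpr ⟨(hq g hg).1, ?_⟩⟩
      rw [Set.mem_singleton_iff]
      exact (hq g hg).2

end Bfacts
section Key1

variable (G) (s : V) (n : ℕ)

lemma key1 : ∀ x ∈ (maxTwoEdgeConnBall G s n).verts,
    ∃ Q : G.Walk x s, Q.IsPath ∧ Q.length ≤ n ∧
      ∀ f ∈ Q.edges, f ∈ (maxTwoEdgeConnBall G s n).edgeSet := by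
  intro x hx
  obtain ⟨w0r, hw0len⟩ := verts_B_subset_ball G s n hx
  set w0 : G.Walk x s := w0r.reverse with hw0
  have hw0l : w0.length ≤ n := by rw [hw0, Walk.length_reverse]; exact hw0len
  set Q : G.Walk x s := w0.bypass with hQ
  have hQpath : Q.IsPath := w0.bypass_isPath
  have hQlen : Q.length ≤ n := le_trans (w0.length_bypass_le) hw0l
  have hQball : ∀ y ∈ Q.support, y ∈ hopBall G s n := by
    intro y hy
    have hy0 : y ∈ w0r.support := by
      have := w0.support_bypass_subset hy
      rwa [hw0, Walk.support_reverse, List.mem_reverse] at this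
    exact ⟨w0r.takeUntil y hy0, le_trans (w0r.length_takeUntil_le hy0) hw0len⟩
  have hmem : (maxTwoEdgeConnBall G s n ⊔ Q.toSubgraph) ∈
      {H : G.Subgraph | H.verts ⊆ hopBall G s n ∧ s ∈ H.verts ∧
        Subgraph.TwoEdgeConnected H} := by
    refine ⟨?_, ?_, ?_, ?_⟩
    · rw [Subgraph.verts_sup]
      exact Set.union_subset (verts_B_subset_ball G s n)
        (fun y hy => hQball y (Q.mem_verts_toSubgraph.mp hy))
    · rw [Subgraph.verts_sup]
      exact Or.inl (s_mem_B G s n)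
    · refine connected_of_walks (s := s) ?_ (fun z hz => ?_)
      · rw [Subgraph.verts_sup]; exact Or.inl (s_mem_B G s n)
      · rw [Subgraph.verts_sup] at hz
        rcases hz with hz | hz
        · obtain ⟨q, hq⟩ := B_walk_avoiding G s n s(z, z) z hz
          exact ⟨q, fun g hg => Subgraph.edgeSet_mono le_sup_left (hq g hg).1⟩
        · have hzs : z ∈ Q.support := Q.mem_verts_toSubgraph.mp hz
          refine ⟨Q.dropUntil z hzs, fun g hg => ?_⟩
          exact Subgraph.edgeSet_mono le_sup_right
            (Q.mem_edges_toSubgraph.mpr (Q.edges_dropUntil_subset hzs hg))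
    · intro f hf
      have hA : ∀ y ∈ (maxTwoEdgeConnBall G s n).verts, ∃ q : G.Walk y s,
          ∀ g ∈ q.edges,
            g ∈ (((maxTwoEdgeConnBall G s n) ⊔ Q.toSubgraph).deleteEdges {f}).edgeSet := by
        intro y hy
        obtain ⟨q, hq⟩ := B_walk_avoiding G s n f y hy
        refine ⟨q, fun g hg => mem_deleteEdges_edgeSet.mpr
          ⟨Subgraph.edgeSet_mono le_sup_left (hq g hg).1, ?_⟩⟩
        rw [Set.mem_singleton_iff]
        exact (hq g hg).2
      refine connected_of_walks (s := s) ?_ (fun z hz => ?_)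
      · rw [Subgraph.deleteEdges_verts, Subgraph.verts_sup]
        exact Or.inl (s_mem_B G s n)
      · rw [Subgraph.deleteEdges_verts, Subgraph.verts_sup] at hz
        rcases hz with hz | hz
        · exact hA z hz
        · have hzs : z ∈ Q.support := Q.mem_verts_toSubgraph.mp hz
          by_cases hfd : f ∈ (Q.dropUntil z hzs).edges
          · have hnd : ((Q.takeUntil z hzs).edges ++ (Q.dropUntil z hzs).edges).Nodup := by
              rw [← Walk.edges_append, Q.take_spec hzs]
              exact hQpath.edges_nodup
            have hft : f ∉ (Q.takeUntil z hzs).edges :=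
              fun h => (List.disjoint_of_nodup_append hnd) h hfd
            obtain ⟨qx, hqx⟩ := hA x hx
            refine ⟨(Q.takeUntil z hzs).reverse.append qx, fun g hg => ?_⟩
            rw [Walk.edges_append, List.mem_append] at hg
            rcases hg with hg | hg
            · rw [Walk.edges_reverse, List.mem_reverse] at hg
              refine mem_deleteEdges_edgeSet.mpr ⟨Subgraph.edgeSet_mono le_sup_right
                (Q.mem_edges_toSubgraph.mpr (Q.edges_takeUntil_subset hzs hg)), ?_⟩
              rw [Set.mem_singleton_iff]
              rintro rfl
              exact hft hg
            · exact hqx g hg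
          · refine ⟨Q.dropUntil z hzs, fun g hg => ?_⟩
            refine mem_deleteEdges_edgeSet.mpr ⟨Subgraph.edgeSet_mono le_sup_right
              (Q.mem_edges_toSubgraph.mpr (Q.edges_dropUntil_subset hzs hg)), ?_⟩
            rw [Set.mem_singleton_iff]
            rintro rfl
            exact hfd hg
  have hle : (maxTwoEdgeConnBall G s n ⊔ Q.toSubgraph) ≤ maxTwoEdgeConnBall G s n :=
    le_sSup hmem
  refine ⟨Q, hQpath, hQlen, fun f hf => ?_⟩
  exact Subgraph.edgeSet_mono (le_trans le_sup_right hle) (Q.mem_edges_toSubgraph.mpr hf)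

end Key1
lemma first_edge {a b y : V} (r : G.Walk a y) (hr : r.IsPath) (he : s(a, b) ∈ r.edges) :
    ∃ r' : G.Walk b y, s(a, b) ∉ r'.edges ∧ r'.length + 1 = r.length ∧
      ∀ f ∈ r'.edges, f ∈ r.edges := by
  cases r with
  | nil => simp at he
  | @cons _ v _ h' rest =>
    rw [Walk.edges_cons, List.mem_cons] at he
    rcases he with he | he
    · have hbv : b = v := by
        rcases Sym2.eq_iff.mp he with ⟨-, h2⟩ | ⟨h1, -⟩
        · exact h2
        · exact absurd h1 h'.ne
      subst hbv
      have hnd := hr.edges_nodup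
      rw [Walk.edges_cons, List.nodup_cons] at hnd
      exact ⟨rest, he ▸ hnd.1, by simp, fun f hf => by simp [Walk.edges_cons, hf]⟩
    · exfalso
      have : a ∈ rest.support := rest.fst_mem_support_of_mem_edges he
      exact ((Walk.cons_isPath_iff _ _).mp hr).2 this

lemma split_at_edge {m y a b : V} (q : G.Walk m y) (hq : q.IsPath) (he : s(a, b) ∈ q.edges) :
    ∃ (c d : V) (pre : G.Walk m c) (suf : G.Walk d y),
      s(c, d) = s(a, b) ∧ s(a, b) ∉ pre.edges ∧ s(a, b) ∉ suf.edges ∧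
      pre.length + 1 + suf.length = q.length ∧
      (∀ f ∈ pre.edges, f ∈ q.edges) ∧ (∀ f ∈ suf.edges, f ∈ q.edges) := by
  have ha : a ∈ q.support := q.fst_mem_support_of_mem_edges he
  have hspec : (q.takeUntil a ha).append (q.dropUntil a ha) = q := q.take_spec ha
  have hedges : (q.takeUntil a ha).edges ++ (q.dropUntil a ha).edges = q.edges := by
    rw [← Walk.edges_append, hspec]
  have hlen : (q.takeUntil a ha).length + (q.dropUntil a ha).length = q.length := by
    rw [← Walk.length_append, hspec]
  have hnd : ((q.takeUntil a ha).edges ++ (q.dropUntil a ha).edges).Nodup := by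
    rw [hedges]; exact hq.edges_nodup
  by_cases hin : s(a, b) ∈ (q.dropUntil a ha).edges
  · obtain ⟨r', hr1, hr2, hr3⟩ := first_edge (q.dropUntil a ha) (hq.dropUntil ha) hin
    refine ⟨a, b, q.takeUntil a ha, r', rfl,
      fun hmem => (List.disjoint_of_nodup_append hnd) hmem hin, hr1, by omega,
      fun f hf => q.edges_takeUntil_subset ha hf,
      fun f hf => q.edges_dropUntil_subset ha (hr3 f hf)⟩
  · have hint : s(a, b) ∈ (q.takeUntil a ha).edges := by
      rcases List.mem_append.mp (hedges ▸ he) with h | h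
      · exact h
      · exact absurd h hin
    have hrev : s(a, b) ∈ (q.takeUntil a ha).reverse.edges := by
      rw [Walk.edges_reverse, List.mem_reverse]; exact hint
    obtain ⟨r', hr1, hr2, hr3⟩ := first_edge (q.takeUntil a ha).reverse
      ((hq.takeUntil ha).reverse) hrev
    have hr2' : r'.length + 1 = (q.takeUntil a ha).length := by
      rwa [Walk.length_reverse] at hr2
    refine ⟨b, a, r'.reverse, q.dropUntil a ha, Sym2.eq_swap, ?_, hin, ?_, ?_, ?_⟩
    · rw [Walk.edges_reverse, List.mem_reverse]; exact hr1
    · rw [Walk.length_reverse]; omega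
    · intro f hf
      rw [Walk.edges_reverse, List.mem_reverse] at hf
      have := hr3 f hf
      rw [Walk.edges_reverse, List.mem_reverse] at this
      exact q.edges_takeUntil_subset ha this
    · exact fun f hf => q.edges_dropUntil_subset ha hf

lemma split_at_length {x y : V} (q : G.Walk x y) (i : ℕ) :
    ∃ (m : V) (pre : G.Walk x m) (suf : G.Walk m y),
      pre.append suf = q ∧ pre.length = min i q.length := by
  induction q generalizing i with
  | nil => exact ⟨_, .nil, .nil, rfl, by simp⟩
  | @cons u v w h rest ih =>
    cases i with
    | zero => exact ⟨_, .nil, .cons h rest, rfl, by simp⟩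
    | succ i =>
      obtain ⟨m, pre, suf, hps, hl⟩ := ih i
      refine ⟨m, .cons h pre, suf, by rw [Walk.cons_append, hps], ?_⟩
      have h1 : rest.length = (Walk.cons h rest).length - 1 := by simp
      simp only [Walk.length_cons]
      omega
lemma key2 (G : SimpleGraph V) (s : V) (n : ℕ) {a b : V}
    (hab : (maxTwoEdgeConnBall G s n).Adj a b) :
    ∃ q : G.Walk a s,
      (∀ f ∈ q.edges, f ∈ (maxTwoEdgeConnBall G s n).edgeSet ∧ f ≠ s(a, b)) ∧
      q.length ≤ 2 * n := by
  have ha : a ∈ (maxTwoEdgeConnBall G s n).verts := hab.fst_mem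
  obtain ⟨q0, hq0⟩ := B_walk_avoiding G s n s(a, b) a ha
  suffices H : ∀ L, ∀ q : G.Walk a s,
      (∀ f ∈ q.edges, f ∈ (maxTwoEdgeConnBall G s n).edgeSet ∧ f ≠ s(a, b)) →
      q.length ≤ L →
      ∃ q' : G.Walk a s,
        (∀ f ∈ q'.edges, f ∈ (maxTwoEdgeConnBall G s n).edgeSet ∧ f ≠ s(a, b)) ∧
        q'.length ≤ 2 * n by
    exact H q0.length q0 hq0 le_rfl
  intro L
  induction L with
  | zero => intro q hq hl; exact ⟨q, hq, by omega⟩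
  | succ L ih =>
    intro q hq hl
    by_cases hle : q.length ≤ 2 * n
    · exact ⟨q, hq, hle⟩
    push_neg at hle
    obtain ⟨m, pre, suf, hps, hplen⟩ := split_at_length q n
    have hsum : pre.length + suf.length = q.length := by
      rw [← hps, Walk.length_append]
    have hplen' : pre.length = n := by omega
    have hqpre : ∀ f ∈ pre.edges,
        f ∈ (maxTwoEdgeConnBall G s n).edgeSet ∧ f ≠ s(a, b) := by
      intro f hf
      exact hq f (by rw [← hps, Walk.edges_append]; exact List.mem_append_left _ hf)
    have hqsuf : ∀ f ∈ suf.edges,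
        f ∈ (maxTwoEdgeConnBall G s n).edgeSet ∧ f ≠ s(a, b) := by
      intro f hf
      exact hq f (by rw [← hps, Walk.edges_append]; exact List.mem_append_right _ hf)
    have hm : m ∈ (maxTwoEdgeConnBall G s n).verts := by
      refine support_subset_verts q ha (fun f hf => (hq f hf).1) m ?_
      rw [← hps, Walk.mem_support_append_iff]
      exact Or.inr suf.start_mem_support
    obtain ⟨Qm, hQp, hQlen, hQB⟩ := key1 G s n m hm
    by_cases heQ : s(a, b) ∈ Qm.edges
    · obtain ⟨c, d, preM, sufD, hcd, hpreav, hsufav, hlen2, hpreS, hsufS⟩ :=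
        split_at_edge Qm hQp heQ
      rcases Sym2.eq_iff.mp hcd with ⟨hc, hd⟩ | ⟨hc, hd⟩
      · subst hc
        refine ih (preM.reverse.append suf) ?_ ?_
        · intro f hf
          rw [Walk.edges_append, List.mem_append] at hf
          rcases hf with hf | hf
          · rw [Walk.edges_reverse, List.mem_reverse] at hf
            exact ⟨hQB f (hpreS f hf), fun h => hpreav (h ▸ hf)⟩
          · exact hqsuf f hf
        · rw [Walk.length_append, Walk.length_reverse]
          omega
      · subst hd
        exact ⟨sufD, fun f hf => ⟨hQB f (hsufS f hf), fun h => hsufav (h ▸ hf)⟩, by omega⟩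
    · refine ⟨pre.append Qm, ?_, ?_⟩
      · intro f hf
        rw [Walk.edges_append, List.mem_append] at hf
        rcases hf with hf | hf
        · exact hqpre f hf
        · exact ⟨hQB f hf, fun h => heQ (h ▸ hf)⟩
      · rw [Walk.length_append]; omega

end JSV

/-- `B'(s, h·p)` is a valid junction structure with root `s` and
hop-length `4·h·p`: for every edge `e` of `B'(s, h·p)` and every vertex `v` of
`B'(s, h·p)`, the graph `B'(s, h·p)` with `e` deleted contains a `v`–`s` path of
hop-length at most `4·h·p`. -/
theorem junction_structure_valid
    {V : Type*} [Fintype V] [DecidableEq V] (G : SimpleGraph V)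
    (s : V) (h p : ℕ) (hh : 1 ≤ h) (hp : 1 ≤ p) :
    ∀ e ∈ (maxTwoEdgeConnBall G s (h * p)).edgeSet,
      ∀ v ∈ (maxTwoEdgeConnBall G s (h * p)).verts,
        ∃ q : ((maxTwoEdgeConnBall G s (h * p)).deleteEdges {e}).spanningCoe.Walk v s,
          q.length ≤ 4 * h * p ∧
          ∀ w ∈ q.support, w ∈ (maxTwoEdgeConnBall G s (h * p)).verts := by
  intro e he v hv
  induction e using Sym2.ind with
  | _ a b =>
  have hab : (maxTwoEdgeConnBall G s (h * p)).Adj a b :=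
    SimpleGraph.Subgraph.mem_edgeSet.mp he
  obtain ⟨Qv, hQp, hQlen, hQB⟩ := JSV.key1 G s (h * p) v hv
  have main : ∃ q'' : G.Walk v s,
      (∀ f ∈ q''.edges, f ∈ (maxTwoEdgeConnBall G s (h * p)).edgeSet ∧ f ≠ s(a, b)) ∧
      q''.length ≤ 4 * (h * p) := by
    by_cases heQ : s(a, b) ∈ Qv.edges
    · obtain ⟨c, d, pre, suf, hcd, hpreav, hsufav, hlen2, hpreS, hsufS⟩ :=
        JSV.split_at_edge Qv hQp heQ
      have hkey : ∃ qc : G.Walk c s,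
          (∀ f ∈ qc.edges, f ∈ (maxTwoEdgeConnBall G s (h * p)).edgeSet ∧ f ≠ s(a, b)) ∧
          qc.length ≤ 2 * (h * p) := by
        rcases Sym2.eq_iff.mp hcd with ⟨hc, hd⟩ | ⟨hc, hd⟩
        · subst hc; exact JSV.key2 G s (h * p) hab
        · subst hc
          obtain ⟨qc, h1, h2⟩ := JSV.key2 G s (h * p) hab.symm
          refine ⟨qc, fun f hf => ⟨(h1 f hf).1, ?_⟩, h2⟩
          have h3 := (h1 f hf).2
          rw [Sym2.eq_swap]
          exact h3
      obtain ⟨qc, hqc1, hqc2⟩ := hkey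
      refine ⟨pre.append qc, ?_, ?_⟩
      · intro f hf
        rw [SimpleGraph.Walk.edges_append, List.mem_append] at hf
        rcases hf with hf | hf
        · exact ⟨hQB f (hpreS f hf), fun h' => hpreav (h' ▸ hf)⟩
        · exact hqc1 f hf
      · rw [SimpleGraph.Walk.length_append]; omega
    · exact ⟨Qv, fun f hf => ⟨hQB f hf, fun h' => heQ (h' ▸ hf)⟩, by omega⟩
  obtain ⟨q'', hq1, hq2⟩ := main
  have hT : ∀ f ∈ q''.edges,
      f ∈ ((maxTwoEdgeConnBall G s (h * p)).deleteEdges {s(a, b)}).spanningCoe.edgeSet := by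
    intro f hf
    induction f with
    | _ x y =>
      rw [SimpleGraph.mem_edgeSet]
      exact SimpleGraph.Subgraph.mem_edgeSet.mp (JSV.mem_deleteEdges_edgeSet.mpr
        ⟨(hq1 _ hf).1, by simpa using (hq1 _ hf).2⟩)
  refine ⟨q''.transfer _ hT, ?_, ?_⟩
  · rw [SimpleGraph.Walk.length_transfer, mul_assoc]
    exact hq2
  · intro w hw
    rw [SimpleGraph.Walk.support_transfer] at hw
    exact JSV.support_subset_verts q'' hv (fun f hf => (hq1 f hf).1) w hw
end

section
/- Let (x,f) be a feasible solution to LP-BB on a finite simple graph G=(V,E) in which ℓ(e) = 1 for every edge e and δ(i) = 1 for every i ∈ [r] (so ℓ(p) equals the hop-length of p). Fix an integer h ≥ 2 and let T = { i ∈ [r] : ∑_{p∈P_i} hop(p)·f_p ≤ h/2 }. Then there exists a feasible solution (x',f') to LP-HC with terminal pairs {(s_i,t_i) : i ∈ T} and hop bound h such that x'_e ≤ min{2x_e, 1} for every edge e; in particular its cost satisfies ∑_{e∈E} c(e)x'_e ≤ 2·∑_{e∈E} c(e)x_e. -/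
open Finset

set_option maxHeartbeats 1000000

/-- Let `(x, f)` be a feasible solution to LP-BB with unit lengths and
unit demands (so the length of a path equals its hop-length).  Fix `h ≥ 2` and let `T`
be the set of commodities whose average fractional hop-length is at most `h/2`.  Then
there is a feasible solution `(x', f')` to LP-HC with terminal pairs indexed by `T` and
hop bound `h` such that `x' e ≤ min (2 x e) 1` for every edge; in particular its cost is
at most twice the cost `∑_e c(e) x_e`. -/
theorem lp_bb_to_lp_hc
    {V : Type*} [Fintype V] [DecidableEq V] (G : SimpleGraph V) [DecidableRel G.Adj]
    (r : ℕ) (s t : Fin r → V)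
    (c : Sym2 V → ℝ) (hc : ∀ e, 0 ≤ c e)
    (x : Sym2 V → ℝ) (f : ∀ i : Fin r, G.Path (s i) (t i) → ℝ)
    (hx : ∀ e, 0 ≤ x e) (hf : ∀ i p, 0 ≤ f i p)
    (hflow : ∀ i, ∑ p : G.Path (s i) (t i), f i p = 1)
    (hcap : ∀ i : Fin r, ∀ e ∈ G.edgeFinset,
      ∑ p : G.Path (s i) (t i), (if e ∈ p.1.edges then f i p else 0) ≤ x e)
    (h : ℕ) (hh : 2 ≤ h)
    (T : Finset (Fin r))
    (hT : T = Finset.univ.filter (fun i : Fin r =>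
      ∑ p : G.Path (s i) (t i), (p.1.length : ℝ) * f i p ≤ (h : ℝ) / 2)) :
    ∃ (x' : Sym2 V → ℝ)
      (f' : ∀ i : Fin r, {p : G.Path (s i) (t i) // p.1.length ≤ h} → ℝ),
      (∀ e, 0 ≤ x' e) ∧ (∀ i p, 0 ≤ f' i p) ∧
      -- LP-HC flow constraints for the commodities in T
      (∀ i ∈ T, ∑ p : {p : G.Path (s i) (t i) // p.1.length ≤ h}, f' i p = 1) ∧
      (∀ i ∈ T, ∀ e ∈ G.edgeFinset,
        ∑ p : {p : G.Path (s i) (t i) // p.1.length ≤ h},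
          (if e ∈ p.1.1.edges then f' i p else 0) ≤ x' e) ∧
      -- edge capacities at most min (2 x e) 1
      (∀ e ∈ G.edgeFinset, x' e ≤ min (2 * x e) 1) ∧
      -- in particular the LP-HC cost is at most twice the LP-BB fixed cost
      (∑ e ∈ G.edgeFinset, c e * x' e ≤ 2 * ∑ e ∈ G.edgeFinset, c e * x e) := by
  classical
  set F : Fin r → ℝ := fun i =>
    ∑ p : {p : G.Path (s i) (t i) // p.1.length ≤ h}, f i p.1 with hFdef
  have hFsum : ∀ i, F i =
      ∑ p ∈ Finset.univ.filter (fun p : G.Path (s i) (t i) => p.1.length ≤ h), f i p := by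
    intro i
    exact (Finset.sum_subtype _ (by simp) _).symm
  have hFnonneg : ∀ i, 0 ≤ F i := fun i => Finset.sum_nonneg fun p _ => hf i p.1
  have hFhalf : ∀ i ∈ T, (1:ℝ)/2 ≤ F i := by
    intro i hi
    rw [hT, Finset.mem_filter] at hi
    have hlen := hi.2
    have hsplit := Finset.sum_filter_add_sum_filter_not Finset.univ
      (fun p : G.Path (s i) (t i) => p.1.length ≤ h) (f i)
    rw [hflow i] at hsplit
    set B := ∑ p ∈ Finset.univ.filter
        (fun p : G.Path (s i) (t i) => ¬ p.1.length ≤ h), f i p with hBdef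
    have h1 : ((h:ℝ)+1) * B ≤ ∑ p : G.Path (s i) (t i), (p.1.length : ℝ) * f i p := by
      rw [hBdef, Finset.mul_sum]
      calc ∑ p ∈ Finset.univ.filter
            (fun p : G.Path (s i) (t i) => ¬ p.1.length ≤ h), ((h:ℝ)+1) * f i p
          ≤ ∑ p ∈ Finset.univ.filter
            (fun p : G.Path (s i) (t i) => ¬ p.1.length ≤ h), (p.1.length : ℝ) * f i p := by
            refine Finset.sum_le_sum fun p hp => ?_
            have hp' : h < p.1.length := by
              have := (Finset.mem_filter.mp hp).2
              omega
            have : ((h:ℝ)+1) ≤ (p.1.length : ℝ) := by exact_mod_cast hp'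
            exact mul_le_mul_of_nonneg_right this (hf i p)
        _ ≤ ∑ p : G.Path (s i) (t i), (p.1.length : ℝ) * f i p := by
            refine Finset.sum_le_sum_of_subset_of_nonneg (Finset.filter_subset _ _)
              fun p _ _ => mul_nonneg (by positivity) (hf i p)
    have hB : B ≤ 1/2 := by
      have hpos : (0:ℝ) < (h:ℝ)+1 := by positivity
      have : ((h:ℝ)+1) * B ≤ ((h:ℝ)+1) * (1/2) := by
        calc ((h:ℝ)+1) * B ≤ (h:ℝ)/2 := h1.trans hlen
          _ ≤ ((h:ℝ)+1) * (1/2) := by ring_nf; linarith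
      exact le_of_mul_le_mul_left this hpos
    rw [hFsum i]
    linarith
  have hFpos : ∀ i ∈ T, (0:ℝ) < F i := fun i hi => lt_of_lt_of_le (by norm_num) (hFhalf i hi)
  refine ⟨fun e => min (2 * x e) 1, fun i p => f i p.1 / F i,
    fun e => le_min (by have := hx e; linarith) zero_le_one,
    fun i p => div_nonneg (hf i p.1) (hFnonneg i), ?_, ?_, fun e _ => le_refl _, ?_⟩
  · intro i hi
    rw [← Finset.sum_div]
    exact div_self (hFpos i hi).ne'
  · intro i hi e he
    set S := ∑ p : {p : G.Path (s i) (t i) // p.1.length ≤ h},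
      (if e ∈ p.1.1.edges then f i p.1 else 0) with hSdef
    have hmain : (∑ p : {p : G.Path (s i) (t i) // p.1.length ≤ h},
        (if e ∈ p.1.1.edges then f i p.1 / F i else 0)) = S / F i := by
      rw [hSdef, Finset.sum_div]
      refine Finset.sum_congr rfl fun p _ => ?_
      split_ifs
      · rfl
      · simp
    rw [hmain]
    have hSx : S ≤ x e := by
      have h1 : S = ∑ p ∈ Finset.univ.filter
          (fun p : G.Path (s i) (t i) => p.1.length ≤ h),
          (if e ∈ p.1.edges then f i p else 0) := by
        rw [hSdef]
        refine (Finset.sum_subtype _ (fun p => ?_)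
          (fun p : G.Path (s i) (t i) => if e ∈ p.1.edges then f i p else 0)).symm
        simp
      rw [h1]
      calc _ ≤ ∑ p : G.Path (s i) (t i), (if e ∈ p.1.edges then f i p else 0) := by
            refine Finset.sum_le_sum_of_subset_of_nonneg (Finset.filter_subset _ _)
              fun p _ _ => by split_ifs; exacts [hf i p, le_refl 0]
        _ ≤ x e := hcap i e he
    have hSF : S ≤ F i := by
      rw [hSdef, hFdef]
      refine Finset.sum_le_sum fun p _ => ?_
      split_ifs with hpe
      · exact le_refl _
      · exact hf i p.1
    refine le_min ?_ ?_
    · rw [div_le_iff₀ (hFpos i hi)]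
      nlinarith [hx e, hFhalf i hi]
    · rw [div_le_one (hFpos i hi)]
      exact hSF
  · calc ∑ e ∈ G.edgeFinset, c e * min (2 * x e) 1
        ≤ ∑ e ∈ G.edgeFinset, c e * (2 * x e) :=
          Finset.sum_le_sum fun e _ => mul_le_mul_of_nonneg_left (min_le_left _ _) (hc e)
      _ = 2 * ∑ e ∈ G.edgeFinset, c e * x e := by
          rw [Finset.mul_sum]; exact Finset.sum_congr rfl fun e _ => by ring
end

section
/- Let (x*, f*, y*) be a feasible solution to LP-Junction with k = 2 on a finite simple graph G=(V,E) with root u, terminal set 𝒯, and hop bound h'. Let y*_max = max_{t∈𝒯} y*_t, let θ ≥ 0 be an integer, let T_θ = { t ∈ 𝒯 : y*_max/2^{θ+1} < y*_t ≤ y*_max/2^{θ} }, and set λ = 2^{θ+1}/y*_max. Then there exists a feasible solution (x,f) to the single-source (h',2)-Fault-HCND LP relaxation with root u and terminal set T_θ such that x_e ≤ λ·x*_e for every edge e ∈ E. -/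
open Finset

/-- Let `(x*, f*, y*)` be a feasible solution to LP-Junction with
`k = 2`, root `u`, terminal set `𝒯` (modeled as `Fin r × Bool`, terminal
`(i, false)`/`(i, true)` being the pair `s i`/`t i`, placed at vertex `τ`), and hop
bound `h'`.  Let `y*_max = max_t y*_t`, let `θ ≥ 0`, let
`T_θ = {t : y*_max/2^(θ+1) < y*_t ≤ y*_max/2^θ}`, and `λ = 2^(θ+1)/y*_max`.  Then there
is a feasible solution `(x, f)` to the single-source `(h', 2)`-Fault-HCND LP relaxation
with root `u` and terminal set `T_θ` such that `x e ≤ λ · x* e` for every edge `e`. -/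
theorem lp_junction_to_single_source
    {V : Type*} [Fintype V] [DecidableEq V] (G : SimpleGraph V) [DecidableRel G.Adj]
    (u : V) (r : ℕ) (hr : 0 < r) (τ : Fin r × Bool → V) (h' : ℕ)
    (x : Sym2 V → ℝ) (y : Fin r × Bool → ℝ)
    (f : ∀ (t : Fin r × Bool) (_Q : Finset (Sym2 V)),
      {p : G.Path (τ t) u // p.1.length ≤ h'} → ℝ)
    (hx : ∀ e, 0 ≤ x e) (hy : ∀ t, 0 ≤ y t) (hf : ∀ t Q p, 0 ≤ f t Q p)
    -- LP-Junction flow conservation: flow avoiding Q equals y t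
    (hflow : ∀ t : Fin r × Bool, ∀ Q : Finset (Sym2 V),
      (↑Q : Set (Sym2 V)) ⊆ G.edgeSet → Q.card < 2 →
      ∑ p : {p : G.Path (τ t) u // p.1.length ≤ h'},
        (if ∀ e ∈ p.1.1.edges, e ∉ Q then f t Q p else 0) = y t)
    -- LP-Junction capacity constraints
    (hcap : ∀ t : Fin r × Bool, ∀ Q : Finset (Sym2 V),
      (↑Q : Set (Sym2 V)) ⊆ G.edgeSet → Q.card < 2 → ∀ e ∈ G.edgeFinset,
      ∑ p : {p : G.Path (τ t) u // p.1.length ≤ h'},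
        (if e ∈ p.1.1.edges then f t Q p else 0) ≤ x e)
    -- paired terminals get equal y-values
    (hpair : ∀ i : Fin r, y (i, false) = y (i, true))
    -- total terminal weight is 1
    (hysum : ∑ t : Fin r × Bool, y t = 1)
    (θ : ℕ)
    (ymax : ℝ)
    (hymax : ymax = Finset.univ.sup' ⟨((⟨0, hr⟩ : Fin r), true), Finset.mem_univ _⟩ y) :
    ∃ (x' : Sym2 V → ℝ)
      (f' : ∀ (t : Fin r × Bool) (_Q : Finset (Sym2 V)),
        {p : G.Path (τ t) u // p.1.length ≤ h'} → ℝ),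
      (∀ e, 0 ≤ x' e) ∧ (∀ t Q p, 0 ≤ f' t Q p) ∧
      -- single-source (h',2)-Fault-HCND LP feasibility for terminals in T_θ
      (∀ t : Fin r × Bool, (ymax / 2 ^ (θ + 1) < y t ∧ y t ≤ ymax / 2 ^ θ) →
        ∀ Q : Finset (Sym2 V), (↑Q : Set (Sym2 V)) ⊆ G.edgeSet → Q.card < 2 →
          (∑ p : {p : G.Path (τ t) u // p.1.length ≤ h'},
            (if ∀ e ∈ p.1.1.edges, e ∉ Q then f' t Q p else 0) = 1) ∧
          (∀ e ∈ G.edgeFinset,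
            ∑ p : {p : G.Path (τ t) u // p.1.length ≤ h'},
              (if e ∈ p.1.1.edges then f' t Q p else 0) ≤ x' e)) ∧
      -- the new capacities are at most λ times the old ones
      (∀ e ∈ G.edgeFinset, x' e ≤ (2 ^ (θ + 1) / ymax) * x e) := by
  have hymax0 : 0 < ymax := by
    obtain ⟨t0, ht0⟩ : ∃ t : Fin r × Bool, 0 < y t := by
      by_contra h
      push_neg at h
      have : (∑ t : Fin r × Bool, y t) ≤ 0 := Finset.sum_nonpos (fun t _ => h t)
      linarith [hysum]
    calc (0:ℝ) < y t0 := ht0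
      _ ≤ _ := by rw [hymax]; exact Finset.le_sup' y (Finset.mem_univ t0)
  have hden : (0:ℝ) < ymax / 2 ^ (θ + 1) := by positivity
  refine ⟨fun e => (2 ^ (θ + 1) / ymax) * x e,
    fun t Q p => f t Q p / y t, ?_, ?_, ?_, ?_⟩
  · intro e; exact mul_nonneg (by positivity) (hx e)
  · intro t Q p; exact div_nonneg (hf t Q p) (hy t)
  · intro t ht Q hQ hQ2
    have hyt : 0 < y t := lt_trans hden ht.1
    have hinv : 1 / y t ≤ 2 ^ (θ + 1) / ymax := by
      rw [← one_div_div ymax (2 ^ (θ + 1))]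
      exact one_div_le_one_div_of_le hden ht.1.le
    constructor
    · have h1 := hflow t Q hQ hQ2
      calc ∑ p : {p : G.Path (τ t) u // p.1.length ≤ h'},
            (if ∀ e ∈ p.1.1.edges, e ∉ Q then f t Q p / y t else 0)
          = (∑ p : {p : G.Path (τ t) u // p.1.length ≤ h'},
            (if ∀ e ∈ p.1.1.edges, e ∉ Q then f t Q p else 0)) / y t := by
            rw [Finset.sum_div]
            refine Finset.sum_congr rfl (fun p _ => ?_)
            split <;> simp
        _ = y t / y t := by rw [h1]
        _ = 1 := div_self hyt.ne'
    · intro e he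
      have h2 := hcap t Q hQ hQ2 e he
      calc ∑ p : {p : G.Path (τ t) u // p.1.length ≤ h'},
            (if e ∈ p.1.1.edges then f t Q p / y t else 0)
          = (∑ p : {p : G.Path (τ t) u // p.1.length ≤ h'},
            (if e ∈ p.1.1.edges then f t Q p else 0)) / y t := by
            rw [Finset.sum_div]
            refine Finset.sum_congr rfl (fun p _ => ?_)
            split <;> simp
        _ ≤ x e / y t := by
            gcongr
        _ ≤ (2 ^ (θ + 1) / ymax) * x e := by
            rw [div_eq_mul_one_div, mul_comm]
            exact mul_le_mul_of_nonneg_right hinv (hx e)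
  · intro e _; exact le_refl _
end
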